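/- arXiv:1108.3754 — 10 statements merged into one kernel-verified Lean document; each statement's English description precedes it below -/
import Mathlib

section
/- Let R be a commutative principal ideal ring and M a free R-module of finite rank s. Then every submodule N of M can be generated by at most s elements. -/
/-!
Peel off one coordinate at a time. If `f : M → M'` is linear and `N ≤ M`, then lifts of
generators of `f(N)` together with generators of `N ∩ ker f` generate `N`. For `M = R × R^n`
and `f` the first projection, `f(N)` is an ideal of `R`, hence principal, and `N ∩ ker f`
is a submodule of `R^n`; induction on `n` gives at most `n` generators for submodules of `R^n`.
-/

universe u

namespace Submodule

variable {R : Type*} {M M' : Type u} [Ring R] [AddCommGroup M] [Module R M]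
  [AddCommGroup M'] [Module R M']

theorem spanRank_le_spanRank_map_add_spanRank_inf_ker (f : M →ₗ[R] M') (N : Submodule R M) :
    N.spanRank ≤ (N.map f).spanRank + (N ⊓ LinearMap.ker f).spanRank := by
  obtain ⟨t, ht_card, ht_span⟩ := (N.map f).exists_span_set_card_eq_spanRank
  have ht : t ⊆ f '' N := by rw [← map_coe, ← ht_span]; exact subset_span
  obtain ⟨u, hu, hbij⟩ := Set.exists_subset_bijOn ((N : Set M) ∩ f ⁻¹' t) f
  rw [Set.image_inter_preimage, Set.inter_eq_right.2 ht] at hbij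
  have hu_le : span R u ≤ N := span_le.2 (hu.trans Set.inter_subset_left)
  have hN_le : N ≤ span R u ⊔ LinearMap.ker f := by
    rw [← LinearMap.map_le_map_iff, map_span, hbij.image_eq, ht_span]
  have hN : N = span R u ⊔ N ⊓ LinearMap.ker f := by
    rw [inf_comm, ← sup_inf_assoc_of_le _ hu_le, inf_eq_right.2 hN_le]
  calc N.spanRank = (span R u ⊔ N ⊓ LinearMap.ker f).spanRank := by rw [← hN]
    _ ≤ (span R u).spanRank + (N ⊓ LinearMap.ker f).spanRank := spanRank_sup_le_sum_spanRank
    _ ≤ Cardinal.mk u + (N ⊓ LinearMap.ker f).spanRank := by grw [spanRank_span_le_card]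
    _ = (N.map f).spanRank + (N ⊓ LinearMap.ker f).spanRank := by
      rw [← ht_card, ← hbij.image_eq, Cardinal.mk_image_eq_of_injOn _ _ hbij.injOn]

theorem spanRank_le_spanRank_map_fst_add_spanRank_comap_inr (N : Submodule R (M × M')) :
    N.spanRank ≤ (N.map (LinearMap.fst R M M')).spanRank +
      (N.comap (LinearMap.inr R M M')).spanRank := by
  have hker : N ⊓ LinearMap.ker (LinearMap.fst R M M') =
      (N.comap (LinearMap.inr R M M')).map (LinearMap.inr R M M') := by
    rw [map_comap_eq, LinearMap.ker_fst, inf_comm]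
  rw [← spanRank_map_eq_of_injective (LinearMap.inr R M M') LinearMap.inr_injective, ← hker]
  exact spanRank_le_spanRank_map_add_spanRank_inf_ker _ N

end Submodule

theorem Submodule.IsPrincipal.spanRank_le_one {R M : Type*} [Semiring R] [AddCommMonoid M]
    [Module R M] {N : Submodule R M} (hN : N.IsPrincipal) : N.spanRank ≤ 1 := by
  obtain ⟨x, rfl⟩ := hN
  simpa using spanRank_span_le_card (R := R) {x}

theorem Submodule.exists_finset_card_le_of_spanRank_le {R M : Type*} [Semiring R]
    [AddCommMonoid M] [Module R M] {N : Submodule R M} {n : ℕ} (hN : N.spanRank ≤ n) :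
    ∃ S : Finset M, (S : Set M) ⊆ N ∧ S.card ≤ n ∧ span R (S : Set M) = N := by
  have hfg : N.FG := spanRank_finite_iff_fg.1 (hN.trans_lt Cardinal.natCast_lt_aleph0)
  obtain ⟨S, hS_card, hS_span⟩ := hfg.exists_span_finset_card_eq_spanFinrank
  refine ⟨S, hS_span ▸ subset_span, ?_, hS_span⟩
  rw [hS_card, ← hfg.spanRank_le_iff]
  exact hN

namespace IsPrincipalIdealRing

variable {R : Type u} [Ring R] [IsPrincipalIdealRing R]

theorem spanRank_le_of_submodule_pi_fin (n : ℕ) (N : Submodule R (Fin n → R)) :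
    N.spanRank ≤ n := by
  induction n with
  | zero => simp [Subsingleton.elim N ⊥]
  | succ n ih =>
    let e := (Fin.consLinearEquiv R fun _ : Fin (n + 1) => R).symm
    calc N.spanRank = (N.map e.toLinearMap).spanRank :=
          (Submodule.spanRank_map_eq_of_injective e.toLinearMap e.injective N).symm
      _ ≤ ((N.map e.toLinearMap).map (LinearMap.fst R R (Fin n → R))).spanRank +
          ((N.map e.toLinearMap).comap (LinearMap.inr R R (Fin n → R))).spanRank :=
          Submodule.spanRank_le_spanRank_map_fst_add_spanRank_comap_inr _
      _ ≤ 1 + n := add_le_add (principal _).spanRank_le_one (ih _)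
      _ = (n + 1 : ℕ) := by push_cast; rw [add_comm]

theorem spanRank_le_of_basis {M : Type*} [AddCommGroup M] [Module R M] {n : ℕ}
    (b : Module.Basis (Fin n) R M) (N : Submodule R M) : N.spanRank ≤ n := by
  rw [← Cardinal.lift_le.{u}, Cardinal.lift_natCast,
    ← Submodule.lift_spanRank_map_eq_of_injective b.equivFun.toLinearMap b.equivFun.injective]
  exact Cardinal.lift_le_nat_iff.2 (spanRank_le_of_submodule_pi_fin n _)

end IsPrincipalIdealRing

/-- Let `R` be a commutative principal ideal ring and `M` a free `R`-module of
finite rank `s`. Then every submodule `N` of `M` can be generated by at most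
`s` elements. -/
theorem submodule_generated_by_at_most_rank
    (R : Type*) [CommRing R] [IsPrincipalIdealRing R]
    (M : Type*) [AddCommGroup M] [Module R M] (s : ℕ)
    (b : Module.Basis (Fin s) R M) (N : Submodule R M) :
    ∃ S : Finset M, (S : Set M) ⊆ (N : Set M) ∧ S.card ≤ s ∧
      Submodule.span R (S : Set M) = N :=
  Submodule.exists_finset_card_le_of_spanRank_le (IsPrincipalIdealRing.spanRank_le_of_basis b N)
end

section
/- Every left ideal of the ring M_ℓ(F_q)[X]/(X^m − 1) is principal, i.e., generated by a single element as a left ideal. -/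
/-!
A submodule of `R^ℓ`, for `R = F[X]/(X^m - 1)`, pulls back to a submodule of `F[X]^ℓ`, which is
free of rank at most `ℓ` because `F[X]` is a PID; so it is spanned by `ℓ` vectors. A left ideal of
`M_ℓ(R)` consists exactly of the matrices all of whose rows lie in its row space, and if that row
space is spanned by `v₁, …, v_ℓ`, the ideal is generated by the matrix with rows `v₁, …, v_ℓ`.
-/

/-- The ring `M_ℓ(F_q)[X]/(X^m - 1)`, realized (via the canonical isomorphism)
as `M_ℓ(F_q[X]/(X^m - 1))`. -/
abbrev QCRing (F : Type*) [Field F] (ℓ m : ℕ) :=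
  Matrix (Fin ℓ) (Fin ℓ) (Polynomial F ⧸ Ideal.span {(Polynomial.X : Polynomial F) ^ m - 1})

open Submodule Function

theorem Submodule.span_range_extend_zero {R M ι κ : Type*} [Semiring R] [AddCommMonoid M]
    [Module R M] {e : κ → ι} (he : Injective e) (w : κ → M) :
    span R (Set.range (extend e w 0)) = span R (Set.range w) := by
  rw [Set.range_extend he, span_union, sup_eq_left, span_le]
  rintro _ ⟨_, _, rfl⟩
  exact zero_mem _

theorem Submodule.exists_eq_span_range_of_isPrincipalIdealRing {A ι : Type*} [CommRing A]
    [IsDomain A] [IsPrincipalIdealRing A] [Fintype ι] (N : Submodule A (ι → A)) :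
    ∃ v : ι → ι → A, N = span A (Set.range v) := by
  obtain ⟨k, b⟩ := N.basisOfPid (Pi.basisFun A ι)
  have hk : Fintype.card (Fin k) ≤ Fintype.card ι := by
    simpa [Module.finrank_eq_card_basis b] using N.finrank_le
  obtain ⟨e⟩ := Embedding.nonempty_of_card_le hk
  refine ⟨extend e (N.subtype ∘ b) 0, ?_⟩
  rw [span_range_extend_zero e.injective, Set.range_comp, span_image, b.span_eq, map_subtype_top]

theorem Submodule.exists_eq_span_range_of_surjective {A R ι κ : Type*} [CommSemiring A]
    [Semiring R] [Algebra A R] (hsurj : Surjective (algebraMap A R))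
    (h : ∀ N : Submodule A (ι → A), ∃ v : κ → ι → A, N = span A (Set.range v))
    (N : Submodule R (ι → R)) : ∃ v : κ → ι → R, N = span R (Set.range v) := by
  let L := (Algebra.linearMap A R).compLeft ι
  obtain ⟨v, hv⟩ := h ((N.restrictScalars A).comap L)
  refine ⟨L ∘ v, restrictScalars_injective A _ _ ?_⟩
  rw [restrictScalars_span A R hsurj, Set.range_comp, span_image, ← hv,
    map_comap_eq_of_surjective hsurj.comp_left]

namespace Matrix

theorem row_mul_eq_sum {l m n R : Type*} [Fintype m] [Semiring R] (C : Matrix l m R)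
    (B : Matrix m n R) (i : l) : (C * B).row i = ∑ j, C i j • B.row j := by
  ext k
  simp [mul_apply, Finset.sum_apply]

variable {n R : Type*} [Fintype n] [DecidableEq n] [Semiring R]

theorem mem_span_singleton_iff_forall_row_mem {A B : Matrix n n R} :
    A ∈ span (Matrix n n R) {B} ↔ ∀ i, A.row i ∈ span R (Set.range B.row) := by
  simp only [mem_span_singleton, mem_span_range_iff_exists_fun, smul_eq_mul]
  constructor
  · rintro ⟨C, rfl⟩ i
    exact ⟨C i, (row_mul_eq_sum C B i).symm⟩
  · intro h
    choose c hc using h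
    exact ⟨of c, funext fun i => (row_mul_eq_sum _ B i).trans (hc i)⟩

def leftIdealRowSpace (I : Ideal (Matrix n n R)) : Submodule R (n → R) where
  carrier := {v | ∀ i, updateRow 0 i v ∈ I}
  zero_mem' i := by simp
  add_mem' {v w} hv hw i := by
    convert I.add_mem (hv i) (hw i) using 1
    ext k l
    by_cases hk : k = i <;> simp [updateRow_apply, hk]
  smul_mem' c v hv i := by
    convert I.mul_mem_left (single i i c) (hv i) using 1
    simp [single_mul_eq_updateRow_zero, Matrix.row]

theorem mem_iff_forall_row_mem_leftIdealRowSpace {I : Ideal (Matrix n n R)} {A : Matrix n n R} :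
    A ∈ I ↔ ∀ i, A.row i ∈ leftIdealRowSpace I := by
  constructor
  · intro hA i j
    simpa [single_mul_eq_updateRow_zero] using I.mul_mem_left (single j i 1) hA
  · intro h
    rw [← one_mul A, ← sum_single_one, Finset.sum_mul]
    refine I.sum_mem fun i _ => ?_
    simpa [single_mul_eq_updateRow_zero] using h i i

theorem isPrincipalIdealRing_of_forall_eq_span_range
    (h : ∀ N : Submodule R (n → R), ∃ v : n → n → R, N = span R (Set.range v)) :
    IsPrincipalIdealRing (Matrix n n R) where
  principal I := by
    obtain ⟨v, hv⟩ := h (leftIdealRowSpace I)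
    refine ⟨of v, Submodule.ext fun A => ?_⟩
    rw [mem_iff_forall_row_mem_leftIdealRowSpace, mem_span_singleton_iff_forall_row_mem, hv]
    rfl

end Matrix

theorem left_ideal_of_QCRing_principal_general
    (F : Type*) [Field F] (ℓ m : ℕ)
    (I : Submodule (QCRing F ℓ m) (QCRing F ℓ m)) :
    ∃ g : QCRing F ℓ m, I = Submodule.span (QCRing F ℓ m) {g} := by
  have : IsPrincipalIdealRing (QCRing F ℓ m) :=
    Matrix.isPrincipalIdealRing_of_forall_eq_span_range
      (exists_eq_span_range_of_surjective Ideal.Quotient.mk_surjective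
        exists_eq_span_range_of_isPrincipalIdealRing)
  exact IsPrincipal.principal I

/-- Every left ideal of `M_ℓ(F_q)[X]/(X^m - 1)` is principal. -/
theorem left_ideal_of_QCRing_principal
    (F : Type*) [Field F] [Fintype F] (ℓ m : ℕ) (hℓ : 0 < ℓ) (hm : 0 < m)
    (I : Submodule (QCRing F ℓ m) (QCRing F ℓ m)) :
    ∃ g : QCRing F ℓ m, I = Submodule.span (QCRing F ℓ m) {g} :=
  left_ideal_of_QCRing_principal_general F ℓ m I
end

section
/- There is a one-to-one correspondence between ℓ-quasi-cyclic codes of length mℓ over F_q and left ideals of M_ℓ(F_q)[X]/(X^m − 1). -/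
/-- The cyclic shift by `j` positions on `F^n`. -/
def shiftBy {F : Type*} {n : ℕ} (j : ℕ) (c : Fin n → F) : Fin n → F :=
  fun i => c ⟨(i.val + j) % n, Nat.mod_lt _ i.pos⟩

/-!
Write `A = F[X]/(X^m - 1)` and `x` for the class of `X`. Grouping the coordinates of a word of
length `mℓ` by their residue mod `ℓ` and reading each group as the coefficients of an element of
`A` identifies `F^{mℓ}` with `A^ℓ`, and turns the shift `T^ℓ` into multiplication by
`x⁻¹ = x^(m-1)`. Since `x^(m-1)` generates `A` as an `F`-algebra, the `T^ℓ`-stable subspaces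
are exactly the `A`-submodules of `A^ℓ`, and these correspond to the left ideals of `M_ℓ(A)` by
Morita: a left ideal is the set of matrices all of whose rows lie in a given submodule.
-/

open Polynomial

theorem pow_pred_pow_pred_of_pow_eq_one {M : Type*} [Monoid M] {x : M} {m : ℕ} (hm : 0 < m)
    (hx : x ^ m = 1) : (x ^ (m - 1)) ^ (m - 1) = x := by
  have hxu : x * x ^ (m - 1) = 1 := by rw [← pow_succ', Nat.sub_add_cancel hm, hx]
  have hum : (x ^ (m - 1)) ^ m = 1 := by rw [← pow_mul, mul_comm, pow_mul, hx, one_pow]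
  calc (x ^ (m - 1)) ^ (m - 1) = x * x ^ (m - 1) * (x ^ (m - 1)) ^ (m - 1) := by
        rw [hxu, one_mul]
    _ = x * (x ^ (m - 1)) ^ m := by rw [mul_assoc, ← pow_succ', Nat.sub_add_cancel hm]
    _ = x := by rw [hum, mul_one]

theorem pow_val_add_one_of_pow_eq_one {M : Type*} [Monoid M] {x : M} {m : ℕ} [NeZero m]
    (hx : x ^ m = 1) (i : Fin m) : x ^ ((i + 1 : Fin m) : ℕ) = x ^ ((i : ℕ) + 1) := by
  rw [Fin.val_add, Fin.val_one', Nat.add_mod_mod, ← pow_eq_pow_mod _ hx]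

theorem Algebra.adjoin_pow_pred_eq_top {R A : Type*} [CommSemiring R] [Semiring A] [Algebra R A]
    {x : A} {m : ℕ} (hm : 0 < m) (hx : x ^ m = 1) (htop : Algebra.adjoin R {x} = ⊤) :
    Algebra.adjoin R {x ^ (m - 1)} = ⊤ := by
  rw [← top_le_iff, ← htop]
  refine Algebra.adjoin_singleton_le ?_
  simpa only [pow_pred_pow_pred_of_pow_eq_one hm hx] using
    Subalgebra.pow_mem _ (Algebra.self_mem_adjoin_singleton R (x ^ (m - 1))) (m - 1)

theorem Nat.add_mul_mod_mul {j ℓ m : ℕ} (k : ℕ) (hj : j < ℓ) :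
    (j + ℓ * k) % (ℓ * m) = j + ℓ * (k % m) := by
  rw [Nat.mod_mul, Nat.add_mul_mod_self_left, Nat.mod_eq_of_lt hj,
    Nat.add_mul_div_left _ _ (by omega), Nat.div_eq_of_lt hj, Nat.zero_add]

def Submodule.restrictScalarsEquivOfAdjoinEqTop {F A M : Type*} [CommSemiring F] [Semiring A]
    [Algebra F A] [AddCommMonoid M] [Module F M] [Module A M] [IsScalarTower F A M] {u : A}
    (hu : Algebra.adjoin F {u} = ⊤) :
    Submodule A M ≃ {S : Submodule F M // ∀ v ∈ S, u • v ∈ S} where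
  toFun P := ⟨P.restrictScalars F, fun v hv => P.smul_mem u hv⟩
  invFun S :=
    { carrier := S.1
      add_mem' := S.1.add_mem
      zero_mem' := S.1.zero_mem
      smul_mem' := fun a v hv => by
        have ha : a ∈ Algebra.adjoin F {u} := hu ▸ Algebra.mem_top
        induction ha using Algebra.adjoin_induction generalizing v with
        | mem x hx => exact (Set.mem_singleton_iff.1 hx) ▸ S.2 v hv
        | algebraMap r => simpa [algebraMap_smul] using S.1.smul_mem r hv
        | add a b _ _ ha hb => simpa [add_smul] using S.1.add_mem (ha v hv) (hb v hv)
        | mul a b _ _ ha hb => simpa [mul_smul] using ha _ (hb v hv) }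
  left_inv _ := rfl
  right_inv _ := rfl

def LinearEquiv.stableSubmoduleEquiv {F V W : Type*} [Semiring F] [AddCommMonoid V]
    [Module F V] [AddCommMonoid W] [Module F W] (e : V ≃ₗ[F] W) {f : V → V} {g : W → W}
    (hfg : ∀ v, e (f v) = g (e v)) :
    {S : Submodule F V // ∀ v ∈ S, f v ∈ S} ≃
      {S : Submodule F W // ∀ w ∈ S, g w ∈ S} :=
  (Submodule.orderIsoMapComap e).toEquiv.subtypeEquiv fun S => by
    refine ⟨?_, fun h v hv => ?_⟩
    · rintro h _ ⟨v, hv, rfl⟩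
      exact hfg v ▸ Submodule.mem_map_of_mem (h v hv)
    · simpa [← hfg] using h (e v) (Submodule.mem_map_of_mem hv)

open Matrix.Module in
def Submodule.moritaEquiv (R M ι : Type*) [Ring R] [AddCommGroup M] [Module R M]
    [Fintype ι] [DecidableEq ι] [Nonempty ι] :
    Submodule R M ≃ Submodule (Matrix ι ι R) (ι → M) where
  toFun N :=
    { carrier := {v | ∀ i, v i ∈ N}
      add_mem' := fun hv hw i => N.add_mem (hv i) (hw i)
      zero_mem' := fun _ => N.zero_mem
      smul_mem' := fun A v hv i => N.sum_mem fun j _ => N.smul_mem _ (hv j) }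
  invFun P := ⨅ i, (P.restrictScalars R).comap (LinearMap.single R (fun _ => M) i)
  left_inv N := by
    ext x
    simp only [Submodule.mem_iInf]
    change (∀ i j, (Pi.single i x : ι → M) j ∈ N) ↔ x ∈ N
    refine ⟨fun h => ?_, fun h i j => ?_⟩
    · simpa using h (Classical.arbitrary ι) (Classical.arbitrary ι)
    · rcases eq_or_ne j i with rfl | hji
      · simp [h]
      · simp [hji]
  right_inv P := by
    ext v
    change (∀ i, v i ∈ ⨅ j, _) ↔ v ∈ P
    simp only [Submodule.mem_iInf]
    change (∀ i j, (Pi.single j (v i) : ι → M) ∈ P) ↔ v ∈ P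
    refine ⟨fun h => ?_, fun hv i j => ?_⟩
    · rw [← Finset.univ_sum_single v]
      exact P.sum_mem fun i _ => h i i
    · simpa using P.smul_mem (Matrix.single j i (1 : R)) hv

open Matrix.Module in
def Matrix.linearEquivRows (R ι : Type*) [Ring R] [Fintype ι] [DecidableEq ι] :
    Matrix ι ι R ≃ₗ[Matrix ι ι R] (ι → ι → R) where
  toFun := Matrix.of.symm
  invFun := Matrix.of
  map_add' _ _ := rfl
  map_smul' A M := by ext i j; simp [Matrix.mul_apply]
  left_inv _ := rfl
  right_inv _ := rfl

open Matrix.Module in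
def Submodule.moritaEquivLeftIdeal (R ι : Type*) [Ring R] [Fintype ι] [DecidableEq ι]
    [Nonempty ι] : Submodule R (ι → R) ≃ Submodule (Matrix ι ι R) (Matrix ι ι R) :=
  (Submodule.moritaEquiv R (ι → R) ι).trans
    (Submodule.orderIsoMapComap (Matrix.linearEquivRows R ι).symm).toEquiv

theorem shiftBy_finProdFinEquiv {α : Type*} {m ℓ : ℕ} [NeZero m] (c : Fin (m * ℓ) → α)
    (i : Fin m) (j : Fin ℓ) :
    shiftBy ℓ c (finProdFinEquiv (i, j)) = c (finProdFinEquiv (i + 1, j)) := by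
  simp only [shiftBy]
  congr 1
  ext
  simp only [finProdFinEquiv_apply_val, Fin.val_add, Fin.val_one', Nat.add_mod_mod]
  rw [add_assoc, ← mul_add_one, mul_comm m, Nat.add_mul_mod_mul _ j.isLt]

namespace AdjoinRoot

variable {R : Type*} [CommRing R] {m : ℕ}

theorem root_X_pow_sub_one_pow : root (X ^ m - 1 : R[X]) ^ m = 1 := by
  have := eval₂_root (X ^ m - 1 : R[X])
  rwa [eval₂_sub, eval₂_X_pow, eval₂_one, sub_eq_zero] at this

variable (R m) in
noncomputable def cyclicBasis [Nontrivial R] [NeZero m] :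
    Module.Basis (Fin m) R (AdjoinRoot (X ^ m - 1 : R[X])) :=
  (powerBasis' (by simpa using monic_X_pow_sub_C (1 : R) (NeZero.ne m))).basis.reindex
    (finCongr (by simpa using natDegree_X_pow_sub_C (n := m) (r := (1 : R))))

theorem cyclicBasis_apply [Nontrivial R] [NeZero m] (i : Fin m) :
    cyclicBasis R m i = root (X ^ m - 1 : R[X]) ^ (i : ℕ) := by
  simp [cyclicBasis]

end AdjoinRoot

section QuasiCyclic

open AdjoinRoot

variable (R : Type*) [CommRing R] [Nontrivial R] (m ℓ : ℕ) [NeZero m]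

/-- The paper's `φ`: coordinate `j + ℓ * i` of a word becomes the coefficient of `X ^ i` in the
`j`-th component. -/
noncomputable def quasiCyclicEquiv :
    (Fin (m * ℓ) → R) ≃ₗ[R] (Fin ℓ → AdjoinRoot (X ^ m - 1 : R[X])) :=
  (LinearEquiv.funCongrLeft R R ((Equiv.prodComm _ _).trans finProdFinEquiv)).trans
    ((LinearEquiv.curry R R (Fin ℓ) (Fin m)).trans
      (LinearEquiv.piCongrRight fun _ => (cyclicBasis R m).equivFun.symm))

variable {R m ℓ}

theorem quasiCyclicEquiv_apply (c : Fin (m * ℓ) → R) (j : Fin ℓ) :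
    quasiCyclicEquiv R m ℓ c j =
      ∑ i : Fin m, c (finProdFinEquiv (i, j)) • root (X ^ m - 1 : R[X]) ^ (i : ℕ) := by
  simp [quasiCyclicEquiv, LinearEquiv.funCongrLeft, Module.Basis.equivFun_symm_apply,
    cyclicBasis_apply, LinearEquiv.curry]

theorem root_smul_quasiCyclicEquiv_shiftBy (c : Fin (m * ℓ) → R) :
    root (X ^ m - 1 : R[X]) • quasiCyclicEquiv R m ℓ (shiftBy ℓ c) =
      quasiCyclicEquiv R m ℓ c := by
  ext j
  simp only [Pi.smul_apply, quasiCyclicEquiv_apply, shiftBy_finProdFinEquiv, Finset.smul_sum]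
  refine Fintype.sum_equiv (Equiv.addRight 1) _ _ fun i => ?_
  rw [Equiv.coe_addRight, pow_val_add_one_of_pow_eq_one root_X_pow_sub_one_pow, pow_succ',
    smul_comm, smul_eq_mul]

theorem quasiCyclicEquiv_shiftBy (c : Fin (m * ℓ) → R) :
    quasiCyclicEquiv R m ℓ (shiftBy ℓ c) =
      root (X ^ m - 1 : R[X]) ^ (m - 1) • quasiCyclicEquiv R m ℓ c := by
  rw [← root_smul_quasiCyclicEquiv_shiftBy c, smul_smul, ← pow_succ,
    Nat.sub_add_cancel NeZero.one_le, root_X_pow_sub_one_pow, one_smul]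

end QuasiCyclic

theorem quasiCyclic_codes_equiv_left_ideals_general
    (F : Type*) [Field F] (m ℓ : ℕ) (hm : 0 < m) (hℓ : 0 < ℓ) :
    Nonempty
      ({C : Submodule F (Fin (m * ℓ) → F) // ∀ c ∈ C, shiftBy ℓ c ∈ C} ≃
        Submodule (QCRing F ℓ m) (QCRing F ℓ m)) := by
  have : NeZero m := ⟨hm.ne'⟩
  have : Nonempty (Fin ℓ) := ⟨⟨0, hℓ⟩⟩
  have hgen : Algebra.adjoin F {AdjoinRoot.root (X ^ m - 1 : F[X]) ^ (m - 1)} = ⊤ :=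
    Algebra.adjoin_pow_pred_eq_top hm AdjoinRoot.root_X_pow_sub_one_pow
      AdjoinRoot.adjoinRoot_eq_top
  exact ⟨((quasiCyclicEquiv F m ℓ).stableSubmoduleEquiv quasiCyclicEquiv_shiftBy).trans <|
    (Submodule.restrictScalarsEquivOfAdjoinEqTop hgen).symm.trans <|
      Submodule.moritaEquivLeftIdeal _ _⟩

/-- There is a one-to-one correspondence between `ℓ`-quasi-cyclic codes of
length `mℓ` over `F_q` (linear subspaces of `F_q^{mℓ}` stable under the shift
`T^ℓ`) and left ideals of `M_ℓ(F_q)[X]/(X^m - 1)`. -/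
theorem quasiCyclic_codes_equiv_left_ideals
    (F : Type*) [Field F] [Fintype F] (m ℓ : ℕ) (hm : 0 < m) (hℓ : 0 < ℓ) :
    Nonempty
      ({C : Submodule F (Fin (m * ℓ) → F) // ∀ c ∈ C, shiftBy ℓ c ∈ C} ≃
        Submodule (QCRing F ℓ m) (QCRing F ℓ m)) :=
  quasiCyclic_codes_equiv_left_ideals_general F m ℓ hm hℓ
end

section
/- Let C be an ℓ-quasi-cyclic code over F_q of length mℓ with block rank r. Then there exist r linearly independent vectors g_1, ..., g_r in C such that the collection {T^{jℓ}(g_i) : 1 ≤ i ≤ r, 0 ≤ j ≤ m−1} spans C. -/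
/-- The index `t*ℓ + j` of the `j`-th coordinate of the `t`-th block. -/
def blockIdx {m ℓ : ℕ} (t : Fin m) (j : Fin ℓ) : Fin (m * ℓ) :=
  ⟨t.val * ℓ + j.val, by
    have h1 : (t.val + 1) * ℓ ≤ m * ℓ := Nat.mul_le_mul_right ℓ t.isLt
    have h2 : (t.val + 1) * ℓ = t.val * ℓ + ℓ := Nat.succ_mul _ _
    have h3 := j.isLt
    omega⟩

open Polynomial Module Submodule Set
open scoped Pointwise

theorem Module.Basis.span_range_coe {R M ι : Type*} [Semiring R] [AddCommMonoid M] [Module R M]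
    {N : Submodule R M} (b : Basis ι R N) : span R (range fun i => (b i : M)) = N := by
  change span R (range (N.subtype ∘ b)) = N
  rw [range_comp, span_image, b.span_eq, Submodule.map_top, range_subtype]

theorem Submodule.apply_mem_span_range_of_mem_span {R M N ι : Type*} [Semiring R]
    [AddCommMonoid M] [AddCommMonoid N] [Module R M] [Module R N] (f : M →ₗ[R] N) {g : ι → M}
    {x : M} (hx : x ∈ span R (range g)) : f x ∈ span R (range fun i => f (g i)) := by
  have := apply_mem_span_image_of_mem_span f hx
  rwa [← range_comp] at this

theorem Submodule.exists_fin_span_eq_of_le_span {R M : Type*} [CommRing R] [IsDomain R]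
    [IsPrincipalIdealRing R] [AddCommGroup M] [Module R M] {n : ℕ} {v : Fin n → M}
    {N : Submodule R M} (hN : N ≤ span R (range v)) :
    ∃ d ≤ n, ∃ g : Fin d → M, span R (range g) = N := by
  set Ψ := Fintype.linearCombination R v
  obtain ⟨d, b⟩ := (N.comap Ψ).basisOfPid (Pi.basisFun R (Fin n))
  refine ⟨d, ?_, (Ψ ∘ₗ (N.comap Ψ).subtype) ∘ b, ?_⟩
  · simpa using (b.linearIndependent.map' _ (ker_subtype _)).fintype_card_le_finrank
  · rw [range_comp, span_image, b.span_eq, Submodule.map_top, LinearMap.range_comp, range_subtype,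
      map_comap_eq, Fintype.range_linearCombination, inf_eq_right.mpr hN]

theorem exists_linearIndependent_fin_extension {K M : Type*} [DivisionRing K] [AddCommGroup M]
    [Module K M] {n : ℕ} {v : Fin n → M} (hv : LinearIndependent K v) {r : ℕ} (hnr : n ≤ r)
    (hr : r ≤ finrank K M) :
    ∃ w : Fin r → M, LinearIndependent K w ∧ range v ⊆ range w := by
  induction r, hnr using Nat.le_induction with
  | base => exact ⟨v, hv, subset_rfl⟩
  | succ r _ ih =>
    obtain ⟨w, hw, hvw⟩ := ih (by omega)
    obtain ⟨x, hx⟩ := exists_linearIndependent_snoc_of_lt_finrank hw (by omega)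
    exact ⟨Fin.snoc w x, hx, hvw.trans (by simp [Fin.range_snoc])⟩

theorem exists_linearIndependent_fin_span_ge {K M : Type*} [DivisionRing K] [AddCommGroup M]
    [Module K M] [FiniteDimensional K M] {d r : ℕ} (g : Fin d → M) (hdr : d ≤ r)
    (hr : r ≤ finrank K M) :
    ∃ w : Fin r → M, LinearIndependent K w ∧ span K (range g) ≤ span K (range w) := by
  set U := span K (range g)
  have hU : finrank K U ≤ r := (finrank_range_le_card g).trans (by simpa using hdr)
  obtain ⟨w, hw, hbw⟩ := exists_linearIndependent_fin_extension
    ((finBasis K U).linearIndependent.map' U.subtype U.ker_subtype) hU hr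
  exact ⟨w, hw, (finBasis K U).span_range_coe.symm.trans_le (span_mono hbw)⟩

theorem Module.AEval'.of_mem_span_iff {R M ι : Type*} [CommSemiring R] [AddCommMonoid M]
    [Module R M] (φ : Module.End R M) (g : ι → M) (x : M) :
    AEval'.of φ x ∈ span R[X] (range fun i => AEval'.of φ (g i)) ↔
      x ∈ span R {y | ∃ i, ∃ j : ℕ, y = (φ ^ j) (g i)} := by
  have hX : span R (range fun j : ℕ => (X ^ j : R[X])) = ⊤ := by
    simpa [X_pow_eq_monomial] using (basisMonomials R).span_eq
  have hset : (range fun j : ℕ => (X ^ j : R[X])) • (range fun i => AEval'.of φ (g i)) =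
      AEval'.of φ '' {y | ∃ i, ∃ j : ℕ, y = (φ ^ j) (g i)} := by
    ext z
    simp only [Set.mem_smul, mem_range, exists_exists_eq_and, AEval'.X_pow_smul_of, mem_image,
      Set.mem_ofPred_eq]
    exact ⟨fun ⟨j, i, h⟩ => ⟨_, ⟨i, j, rfl⟩, h⟩, fun ⟨_, ⟨i, j, hy⟩, h⟩ => ⟨j, i, hy ▸ h⟩⟩
  rw [← restrictScalars_mem R, ← span_smul_of_span_eq_top hX, hset, span_image_linearEquiv,
    mem_map_equiv, LinearEquiv.symm_apply_apply]

theorem Module.AEval'.of_mem_span_of_mem_span {R M ι : Type*} [CommSemiring R] [AddCommMonoid M]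
    [Module R M] (φ : Module.End R M) {g : ι → M} {x : M} (hx : x ∈ span R (range g)) :
    AEval'.of φ x ∈ span R[X] (range fun i => AEval'.of φ (g i)) :=
  span_le_restrictScalars R R[X] _ (apply_mem_span_range_of_mem_span (AEval'.of φ).toLinearMap hx)

section Shift

variable {α : Type*} {n : ℕ}

theorem shiftBy_zero (c : Fin n → α) : shiftBy 0 c = c := by
  funext i
  simp [shiftBy, Nat.mod_eq_of_lt i.isLt]

theorem shiftBy_shiftBy (a b : ℕ) (c : Fin n → α) :
    shiftBy a (shiftBy b c) = shiftBy (a + b) c := by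
  funext i
  simp only [shiftBy, Nat.mod_add_mod, Nat.add_assoc]

theorem shiftBy_mod (a : ℕ) (c : Fin n → α) : shiftBy (a % n) c = shiftBy a c := by
  funext i
  simp only [shiftBy, Nat.add_mod_mod]

def shiftLinear (R : Type*) [Semiring R] (n a : ℕ) : (Fin n → R) →ₗ[R] Fin n → R :=
  LinearMap.funLeft R R fun i => ⟨(i.val + a) % n, Nat.mod_lt _ i.pos⟩

variable {R : Type*} [Semiring R]

@[simp] theorem shiftLinear_apply (a : ℕ) (c : Fin n → R) : shiftLinear R n a c = shiftBy a c := rfl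

theorem shiftLinear_pow_apply (a e : ℕ) (c : Fin n → R) :
    (shiftLinear R n a ^ e) c = shiftBy (e * a) c := by
  induction e with
  | zero => simp [shiftBy_zero]
  | succ e ih => rw [pow_succ', Module.End.mul_apply, ih, shiftLinear_apply, shiftBy_shiftBy,
      add_one_mul, add_comm]

end Shift

section Blocks

variable {m ℓ : ℕ}

theorem blockIdx_eq_finProdFinEquiv (t : Fin m) (j : Fin ℓ) :
    blockIdx t j = finProdFinEquiv (t, j) := by
  ext
  simp only [blockIdx, finProdFinEquiv_apply_val]
  ring

theorem blockIdx_injective2 : Function.Injective2 (blockIdx (m := m) (ℓ := ℓ)) := by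
  intro s t u v h
  simp only [blockIdx_eq_finProdFinEquiv, EmbeddingLike.apply_eq_iff_eq, Prod.mk.injEq] at h
  exact h

theorem exists_blockIdx_eq (i : Fin (m * ℓ)) : ∃ t u, blockIdx t u = i := by
  obtain ⟨⟨t, u⟩, rfl⟩ := finProdFinEquiv.surjective i
  exact ⟨t, u, blockIdx_eq_finProdFinEquiv t u⟩

theorem shiftBy_mul_apply_blockIdx {α : Type*} (e : ℕ) (c : Fin (m * ℓ) → α) (s : Fin m)
    (u : Fin ℓ) :
    shiftBy (e * ℓ) c (blockIdx s u) = c (blockIdx ⟨(s + e) % m, Nat.mod_lt _ s.pos⟩ u) := by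
  simp only [shiftBy, blockIdx]
  congr 2
  rw [Nat.mul_comm m, Nat.mod_mul, show s.val * ℓ + u + e * ℓ = u + ℓ * (s + e) by ring,
    Nat.add_mul_mod_self_left, Nat.mod_eq_of_lt u.isLt, Nat.add_mul_div_left _ _ u.pos,
    Nat.div_eq_of_lt u.isLt, Nat.zero_add]
  ring

end Blocks

section BlockMaps

variable (R : Type*) [Semiring R] {m ℓ : ℕ}

noncomputable def blockEmb (t : Fin m) : (Fin ℓ → R) →ₗ[R] Fin (m * ℓ) → R :=
  Function.ExtendByZero.linearMap R (blockIdx t)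

def blockProj (t : Fin m) : (Fin (m * ℓ) → R) →ₗ[R] Fin ℓ → R :=
  LinearMap.funLeft R R (blockIdx t)

variable {R}

@[simp] theorem blockProj_apply (t : Fin m) (c : Fin (m * ℓ) → R) (j : Fin ℓ) :
    blockProj R t c j = c (blockIdx t j) := rfl

theorem blockEmb_apply_blockIdx (t s : Fin m) (v : Fin ℓ → R) (u : Fin ℓ) :
    blockEmb R t v (blockIdx s u) = if s = t then v u else 0 := by
  rw [blockEmb, Function.ExtendByZero.linearMap_apply]
  split_ifs with h
  · subst h
    exact (blockIdx_injective2.right s).extend_apply _ _ _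
  · refine Function.extend_apply' _ _ _ ?_
    rintro ⟨u', hu'⟩
    exact h (blockIdx_injective2 hu').1.symm

theorem sum_blockEmb_blockProj (c : Fin (m * ℓ) → R) : ∑ t, blockEmb R t (blockProj R t c) = c := by
  funext i
  obtain ⟨s, u, rfl⟩ := exists_blockIdx_eq i
  simp [Finset.sum_apply, blockEmb_apply_blockIdx]

theorem blockProj_shiftBy (t : Fin m) (c : Fin (m * ℓ) → R) :
    blockProj R ⟨0, t.pos⟩ (shiftBy (t * ℓ) c) = blockProj R t c := by
  funext u
  simp [shiftBy_mul_apply_blockIdx, Nat.mod_eq_of_lt t.isLt]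

theorem shiftBy_blockEmb (t : Fin m) (v : Fin ℓ → R) :
    shiftBy ((m - t) * ℓ) (blockEmb R ⟨0, t.pos⟩ v) = blockEmb R t v := by
  funext i
  obtain ⟨s, u, rfl⟩ := exists_blockIdx_eq i
  have hst : (s + (m - t)) % m = 0 ↔ s = t := by
    rw [Fin.ext_iff]
    by_cases hts : t.val ≤ s
    · rw [show s + (m - t) = (s - t) + m by omega, Nat.add_mod_right,
        Nat.mod_eq_of_lt (by omega)]
      omega
    · rw [Nat.mod_eq_of_lt (by omega)]
      omega
  simp [shiftBy_mul_apply_blockIdx, blockEmb_apply_blockIdx, Fin.ext_iff, hst]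

end BlockMaps

section QuasiCyclic

variable {R : Type*} [Semiring R] {m ℓ : ℕ}

theorem span_shiftBy_eq_span_pow (hm : 0 < m) {ι : Type*} (g : ι → Fin (m * ℓ) → R) :
    span R {x | ∃ i, ∃ j : Fin m, x = shiftBy (j.val * ℓ) (g i)} =
      span R {x | ∃ i, ∃ j : ℕ, x = (shiftLinear R (m * ℓ) ℓ ^ j) (g i)} := by
  congr 1
  ext x
  simp only [Set.mem_ofPred_eq, shiftLinear_pow_apply]
  constructor
  · rintro ⟨i, j, rfl⟩
    exact ⟨i, j, rfl⟩
  · rintro ⟨i, j, rfl⟩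
    refine ⟨i, ⟨j % m, Nat.mod_lt _ hm⟩, ?_⟩
    rw [← Nat.mul_mod_mul_right, shiftBy_mod]

theorem shiftBy_mul_mem {C : Submodule R (Fin (m * ℓ) → R)} (hqc : ∀ c ∈ C, shiftBy ℓ c ∈ C)
    {c : Fin (m * ℓ) → R} (hc : c ∈ C) (j : ℕ) : shiftBy (j * ℓ) c ∈ C := by
  induction j with
  | zero => rwa [zero_mul, shiftBy_zero]
  | succ j ih => rw [add_one_mul, add_comm, ← shiftBy_shiftBy]; exact hqc _ ih

end QuasiCyclic

section QuasiCyclicComm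

variable {R : Type*} [CommSemiring R] {m ℓ : ℕ}

theorem aeval_of_mem_span_blockEmb (hm : 0 < m) {C : Submodule R (Fin (m * ℓ) → R)}
    (hqc : ∀ c ∈ C, shiftBy ℓ c ∈ C) {ι : Type*} {w : ι → Fin ℓ → R}
    (hW : C.map (blockProj R ⟨0, hm⟩) ≤ span R (range w)) {c : Fin (m * ℓ) → R} (hc : c ∈ C) :
    AEval'.of (shiftLinear R (m * ℓ) ℓ) c ∈
      span R[X]
        (range fun i => AEval'.of (shiftLinear R (m * ℓ) ℓ) (blockEmb R ⟨0, hm⟩ (w i))) := by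
  rw [← sum_blockEmb_blockProj c, map_sum]
  refine sum_mem fun t _ => ?_
  have hproj : blockProj R t c ∈ span R (range w) :=
    hW ⟨_, shiftBy_mul_mem hqc hc t, blockProj_shiftBy t c⟩
  rw [← shiftBy_blockEmb, ← shiftLinear_pow_apply, ← Module.End.smul_def, ← AEval'.X_pow_smul_of]
  exact smul_mem _ _
    (AEval'.of_mem_span_of_mem_span _ (apply_mem_span_range_of_mem_span _ hproj))

end QuasiCyclicComm

section QuasiCyclicField

variable {F : Type*} [Field F] {m ℓ : ℕ}

theorem finrank_map_blockProj {k : ℕ} {C : Submodule F (Fin (m * ℓ) → F)}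
    {G : Matrix (Fin k) (Fin (m * ℓ)) F} (hGspan : span F (range fun i => G i) = C) (t : Fin m) :
    finrank F (C.map (blockProj F t)) = (G.submatrix id (fun j : Fin ℓ => blockIdx t j)).rank := by
  rw [Matrix.rank_eq_finrank_span_row, ← hGspan, map_span, ← range_comp]
  rfl

theorem exists_aeval_generators (hm : 0 < m) {C : Submodule F (Fin (m * ℓ) → F)}
    (hqc : ∀ c ∈ C, shiftBy ℓ c ∈ C) :
    ∃ d ≤ finrank F (C.map (blockProj F ⟨0, hm⟩)), ∃ g : Fin d → Fin (m * ℓ) → F,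
      (∀ i, g i ∈ C) ∧ ∀ c ∈ C, AEval'.of (shiftLinear F (m * ℓ) ℓ) c ∈
        span F[X] (range fun i => AEval'.of (shiftLinear F (m * ℓ) ℓ) (g i)) := by
  set S := shiftLinear F (m * ℓ) ℓ
  set C' := AEval.mapSubmodule F _ S ⟨C, (Module.End.mem_invtSubmodule _).2 hqc⟩
  have hmem (x) : x ∈ C' ↔ (AEval'.of S).symm x ∈ C := AEval.mem_mapSubmodule_apply F _ S
  have hC' : C' ≤ span F[X] (range fun i =>
      AEval'.of S (blockEmb F ⟨0, hm⟩ (finBasis F (C.map (blockProj F ⟨0, hm⟩)) i))) := by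
    intro x hx
    rw [← (AEval'.of S).apply_symm_apply x]
    exact aeval_of_mem_span_blockEmb hm hqc (finBasis F _).span_range_coe.ge ((hmem x).1 hx)
  obtain ⟨d, hd, g, hg⟩ := exists_fin_span_eq_of_le_span hC'
  refine ⟨d, hd, fun i => (AEval'.of S).symm (g i),
    fun i => (hmem _).1 (hg ▸ subset_span (mem_range_self i)), fun c hc => ?_⟩
  simpa [hg] using (hmem (AEval'.of S c)).2 (by simpa using hc)

end QuasiCyclicField

theorem generator_from_blockRank_general
    (F : Type*) [Field F] (m ℓ k r : ℕ)
    (hm : 0 < m)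
    (C : Submodule F (Fin (m * ℓ) → F))
    (hqc : ∀ c ∈ C, shiftBy ℓ c ∈ C)
    (G : Matrix (Fin k) (Fin (m * ℓ)) F)
    (hGspan : Submodule.span F (Set.range fun i => G i) = C)
    (hr : ∀ t : Fin m, (G.submatrix id (fun j : Fin ℓ => blockIdx t j)).rank = r) :
    ∃ g : Fin r → (Fin (m * ℓ) → F),
      (∀ i, g i ∈ C) ∧ LinearIndependent F g ∧
      Submodule.span F
        {x | ∃ (i : Fin r) (j : Fin m), x = shiftBy (j.val * ℓ) (g i)} = C := by
  have hW : finrank F (C.map (blockProj F ⟨0, hm⟩)) = r :=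
    (finrank_map_blockProj hGspan _).trans (hr _)
  obtain ⟨d, hdr, g, hgC, hCg⟩ := exists_aeval_generators hm hqc
  obtain ⟨h, hh, hgh⟩ := exists_linearIndependent_fin_span_ge (fun i => (⟨g i, hgC i⟩ : C))
    (hW ▸ hdr) (hW ▸ finrank_map_le _ C)
  refine ⟨fun i => h i, fun i => (h i).2, hh.map' C.subtype C.ker_subtype, le_antisymm ?_ ?_⟩
  · rw [span_le]
    rintro _ ⟨i, j, rfl⟩
    exact shiftBy_mul_mem hqc (h i).2 j
  · intro c hc
    rw [span_shiftBy_eq_span_pow hm, ← AEval'.of_mem_span_iff]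
    refine span_le.2 ?_ (hCg c hc)
    rintro _ ⟨i, rfl⟩
    exact AEval'.of_mem_span_of_mem_span _
      (apply_mem_span_range_of_mem_span C.subtype (hgh (subset_span (mem_range_self i))))

/-- Let `C` be an `ℓ`-quasi-cyclic code over `F_q` of length `mℓ` with block
rank `r`. Then there exist `r` linearly independent vectors `g_1, …, g_r` of
`C` such that the vectors `T^{jℓ}(g_i)`, `1 ≤ i ≤ r`, `0 ≤ j ≤ m-1`, span `C`. -/
theorem generator_from_blockRank
    (F : Type*) [Field F] [Fintype F] (m ℓ k r : ℕ)
    (hm : 0 < m) (hℓ : 0 < ℓ) (hk : 0 < k)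
    (C : Submodule F (Fin (m * ℓ) → F))
    (hqc : ∀ c ∈ C, shiftBy ℓ c ∈ C)
    (G : Matrix (Fin k) (Fin (m * ℓ)) F)
    (hGind : LinearIndependent F (fun i => G i))
    (hGspan : Submodule.span F (Set.range fun i => G i) = C)
    (hr : ∀ t : Fin m, (G.submatrix id (fun j : Fin ℓ => blockIdx t j)).rank = r) :
    ∃ g : Fin r → (Fin (m * ℓ) → F),
      (∀ i, g i ∈ C) ∧ LinearIndependent F g ∧
      Submodule.span F
        {x | ∃ (i : Fin r) (j : Fin m), x = shiftBy (j.val * ℓ) (g i)} = C :=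
  generator_from_blockRank_general F m ℓ k r hm C hqc G hGspan hr
end

section
/- Let q be a prime power and suppose q^{sℓ} − 1 = m. Then there exists a matrix A ∈ M_ℓ(F_{q^s}) which is a primitive m-th root of unity, i.e., A^m = I_ℓ, A^i ≠ I_ℓ for 0 < i < m, and det(A^i − A^j) ≠ 0 whenever i ≢ j (mod m). -/
/-!
Let `L` be the extension of `K` of degree `ℓ`, so `|L| = m + 1`, and let `α` generate the cyclic
group `Lˣ`, which has order `m`. Multiplication by `α` in a `K`-basis of `L` is a matrix `A`.
Since `x ↦ leftMulMatrix x` is an injective algebra map, `A` has order `m` as well, and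
`det (A ^ i - A ^ j)` is the norm of `α ^ i - α ^ j`, nonzero because the powers `α ^ i`
with `i < m` are distinct.
-/

open Algebra

section leftMulMatrix

variable {K L ι : Type*} [Field K] [Field L] [Algebra K L] [Fintype ι] [DecidableEq ι]
  (b : Module.Basis ι K L)

theorem orderOf_leftMulMatrix (x : L) : orderOf (leftMulMatrix b x) = orderOf x :=
  orderOf_injective (leftMulMatrix b).toMonoidHom (leftMulMatrix_injective b) x

theorem det_leftMulMatrix_sub_ne_zero {x y : L} (hxy : x ≠ y) :
    (leftMulMatrix b x - leftMulMatrix b y).det ≠ 0 := by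
  rw [← map_sub, ← norm_eq_matrix_det b]
  exact norm_ne_zero_iff_of_basis b |>.mpr (sub_ne_zero.mpr hxy)

theorem det_pow_sub_pow_leftMulMatrix_ne_zero (x : L) {i j : ℕ} (hi : i < orderOf x)
    (hj : j < orderOf x) (hij : i ≠ j) :
    (leftMulMatrix b x ^ i - leftMulMatrix b x ^ j).det ≠ 0 := by
  rw [← map_pow, ← map_pow]
  exact det_leftMulMatrix_sub_ne_zero b fun h => hij (pow_injOn_Iio_orderOf hi hj h)

end leftMulMatrix

theorem FiniteField.exists_orderOf_eq_natCard_sub_one (L : Type*) [Field L] [Finite L] :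
    ∃ α : L, orderOf α = Nat.card L - 1 := by
  obtain ⟨g, hg⟩ := IsCyclic.exists_ofOrder_eq_natCard (α := Lˣ)
  exact ⟨g, by rw [orderOf_units, hg, Nat.card_units]⟩

/-- Let `K = F_{q^s}` and suppose `q^{sℓ} - 1 = m`, i.e. `m + 1 = |K|^ℓ`. Then
there exists a primitive `m`-th root of unity in `M_ℓ(K)`: a matrix `A` with
`A^m = I`, `A^i ≠ I` for `0 < i < m`, and `det(A^i - A^j) ≠ 0` for `i ≠ j`. -/
theorem exists_primitive_root_matrix
    (K : Type*) [Field K] [Fintype K] (ℓ m : ℕ) (hℓ : 0 < ℓ)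
    (hm : m + 1 = Fintype.card K ^ ℓ) :
    ∃ A : Matrix (Fin ℓ) (Fin ℓ) K,
      A ^ m = 1 ∧
      (∀ i : ℕ, 0 < i → i < m → A ^ i ≠ 1) ∧
      (∀ i j : ℕ, i < m → j < m → i ≠ j → (A ^ i - A ^ j).det ≠ 0) := by
  have : NeZero ℓ := ⟨hℓ.ne'⟩
  obtain ⟨p, _⟩ := CharP.exists K
  have : Fact p.Prime := ⟨CharP.char_is_prime K p⟩
  let L := FiniteField.Extension K p ℓ
  let b : Module.Basis (Fin ℓ) K L :=
    Module.finBasisOfFinrankEq K L (FiniteField.finrank_extension K p ℓ)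
  obtain ⟨α, hα⟩ := FiniteField.exists_orderOf_eq_natCard_sub_one L
  have hαm : orderOf α = m := by
    rw [hα, FiniteField.natCard_extension, Nat.card_eq_fintype_card, ← hm, Nat.add_sub_cancel]
  have hA : orderOf (leftMulMatrix b α) = m := (orderOf_leftMulMatrix b α).trans hαm
  refine ⟨leftMulMatrix b α, hA ▸ pow_orderOf_eq_one _, fun i hi0 him => ?_, fun i j hi hj => ?_⟩
  · exact pow_ne_one_of_lt_orderOf hi0.ne' (hA ▸ him)
  · exact det_pow_sub_pow_leftMulMatrix_ne_zero b α (hαm ▸ hi) (hαm ▸ hj)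
end

section
/- Let A ∈ M_ℓ(F_{q^s}) be a primitive m-th root of unity and δ ≤ m. The quasi-BCH code QBCH_q(m, ℓ, δ, A) = {(c_1,...,c_m) ∈ (F_q^ℓ)^m : Σ_{j=0}^{m−1} A^{ij} c_{j+1} = 0 for i = 1,...,δ−1} is an F_q-linear code of length mℓ, dimension at least (m − s(δ−1))ℓ, and ℓ-block minimum distance at least δ. -/
/-!
If a nonzero codeword `c` had nonzero blocks only at `w < δ` positions `j₁, …, j_w`, the checks
for `i = 1, …, w` would form a block Vandermonde system `∑ₖ (A^{jₖ})^i c_{jₖ} = 0` whose nodes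
`A^{jₖ}` are commuting units with invertible pairwise differences. As in the scalar case such a
system has only the trivial solution: multiplying the `k`-th unknown by `A^{jₖ} - A^{j_w}` removes
the last one, and induction does the rest. The dimension bound is rank–nullity for the
`F`-linear syndrome map, whose target `(E^ℓ)^{δ-1}` has `F`-dimension `s (δ - 1) ℓ`.
-/

open Finset Matrix Module LinearMap

theorem eq_zero_of_sum_pow_smul_eq_zero {R M ι : Type*} [Ring R] [AddCommGroup M] [Module R M]
    {B : ι → R} (hcomm : ∀ k k', Commute (B k) (B k')) (hunit : ∀ k, IsUnit (B k))
    (hsub : ∀ k k', k ≠ k' → IsUnit (B k - B k')) {v : ι → M} (s : Finset ι)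
    (hv : ∀ i, 1 ≤ i → i ≤ #s → ∑ k ∈ s, B k ^ i • v k = 0) :
    ∀ k ∈ s, v k = 0 := by
  classical
  induction s using Finset.induction_on generalizing v with
  | empty => simp
  | insert a s ha ih =>
    have hv' : ∀ i, 1 ≤ i → i ≤ #s + 1 → ∑ k ∈ s, B k ^ i • v k = -(B a ^ i • v a) := by
      intro i hi1 hi2
      have h := hv i hi1 (by rwa [card_insert_of_notMem ha])
      rwa [sum_insert ha, add_comm, ← eq_neg_iff_add_eq_zero] at h
    have hs : ∀ k ∈ s, (B k - B a) • v k = 0 := by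
      refine ih fun i hi1 hi2 => ?_
      have hterm : ∀ k, B k ^ i • (B k - B a) • v k = B k ^ (i + 1) • v k - B a • B k ^ i • v k := by
        intro k
        rw [smul_smul, smul_smul, mul_sub, ← pow_succ, ((hcomm k a).pow_left i).eq, sub_smul]
      rw [sum_congr rfl fun k _ => hterm k, sum_sub_distrib, ← smul_sum, hv' i hi1 (by omega),
        hv' (i + 1) (by omega) (by omega), smul_neg, smul_smul, ← pow_succ', sub_self]
    have hvs : ∀ k ∈ s, v k = 0 := fun k hk =>
      (hsub k a (by rintro rfl; exact ha hk)).smul_eq_zero.mp (hs k hk)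
    have hva : v a = 0 := by
      have h1 := hv' 1 le_rfl (by omega)
      rw [sum_eq_zero fun k hk => by rw [hvs k hk, smul_zero], eq_comm, neg_eq_zero, pow_one] at h1
      exact (hunit a).smul_eq_zero.mp h1
    simpa [hva] using hvs

theorem LinearMap.finrank_sub_finrank_le_finrank_ker {K V W : Type*} [DivisionRing K]
    [AddCommGroup V] [Module K V] [AddCommGroup W] [Module K W]
    [FiniteDimensional K V] [FiniteDimensional K W] (f : V →ₗ[K] W) :
    finrank K V - finrank K W ≤ finrank K (ker f) := by
  have := finrank_range_add_finrank_ker f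
  have := (range f).finrank_le
  omega

section QuasiBCH

variable {F E : Type*} [Field F] [Field E] [Algebra F E] {m ℓ : ℕ}

variable (F m) in
def quasiBCHSyndrome (A : Matrix (Fin ℓ) (Fin ℓ) E) (r : ℕ) :
    (Fin m → Fin ℓ → F) →ₗ[F] Fin r → Fin ℓ → E :=
  LinearMap.pi fun i => ∑ j : Fin m, (A ^ (((i : ℕ) + 1) * j)).mulVecLin.restrictScalars F ∘ₗ
    LinearMap.compLeft (Algebra.linearMap F E) (Fin ℓ) ∘ₗ LinearMap.proj j

theorem quasiBCHSyndrome_apply (A : Matrix (Fin ℓ) (Fin ℓ) E) {r : ℕ} (c : Fin m → Fin ℓ → F)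
    (i : Fin r) : quasiBCHSyndrome F m A r c i =
      ∑ j : Fin m, A ^ (((i : ℕ) + 1) * j) *ᵥ fun t => algebraMap F E (c j t) := by
  simp only [quasiBCHSyndrome, pi_apply, LinearMap.coe_sum, Finset.sum_apply]
  rfl

theorem mem_ker_quasiBCHSyndrome_iff {A : Matrix (Fin ℓ) (Fin ℓ) E} {r : ℕ}
    {c : Fin m → Fin ℓ → F} :
    c ∈ ker (quasiBCHSyndrome F m A r) ↔ ∀ i : ℕ, 1 ≤ i → i ≤ r →
      ∑ j : Fin m, A ^ (i * j.val) *ᵥ (fun t => algebraMap F E (c j t)) = 0 := by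
  rw [mem_ker, funext_iff]
  simp only [quasiBCHSyndrome_apply, Pi.zero_apply]
  constructor
  · intro h i hi1 hi2
    obtain ⟨i, rfl⟩ := Nat.exists_eq_add_of_le' hi1
    exact h ⟨i, by omega⟩
  · intro h i
    exact h (i + 1) (by omega) (by omega)

theorem finrank_ker_quasiBCHSyndrome [FiniteDimensional F E] (A : Matrix (Fin ℓ) (Fin ℓ) E)
    (r : ℕ) : (m - finrank F E * r) * ℓ ≤ finrank F (ker (quasiBCHSyndrome F m A r)) := by
  refine le_of_eq_of_le ?_ (quasiBCHSyndrome F m A r).finrank_sub_finrank_le_finrank_ker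
  simp only [Nat.sub_mul, finrank_pi_fintype, finrank_self, Fintype.card_fin,
    sum_const, card_univ, smul_eq_mul]
  ring_nf

theorem lt_card_support_of_mem_ker_quasiBCHSyndrome {A : Matrix (Fin ℓ) (Fin ℓ) E} {r : ℕ}
    (hA : A ^ m = 1) (hsub : ∀ i j : ℕ, i < m → j < m → i ≠ j → IsUnit (A ^ i - A ^ j))
    {c : Fin m → Fin ℓ → F} (hc : c ∈ ker (quasiBCHSyndrome F m A r)) (hc0 : c ≠ 0) :
    r < Nat.card {j : Fin m // c j ≠ 0} := by
  classical
  obtain ⟨j₀, hj₀⟩ := Function.ne_iff.mp hc0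
  have hAunit : IsUnit A := IsUnit.of_pow_eq_one hA j₀.pos.ne'
  rw [Nat.card_eq_fintype_card, Fintype.card_subtype]
  by_contra! hS
  suffices (fun t => algebraMap F E (c j₀ t)) = 0 from
    hj₀ (funext fun t => (algebraMap F E).injective (by simpa using congrFun this t))
  refine eq_zero_of_sum_pow_smul_eq_zero (B := fun j : Fin m => A ^ (j : ℕ))
    (v := fun j t => algebraMap F E (c j t))
    (fun _ _ => Commute.pow_pow_self A _ _) (fun _ => hAunit.pow _)
    (fun j j' hjj' => hsub _ _ j.isLt j'.isLt (Fin.val_ne_of_ne hjj'))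
    (univ.filter fun j => c j ≠ 0) (fun i hi1 hi2 => ?_) j₀ (by simpa using hj₀)
  have hterm : ∀ j, c j = 0 → (A ^ (j : ℕ)) ^ i • (fun t => algebraMap F E (c j t)) = 0 := by
    intro j hcj
    simp only [hcj, Pi.zero_apply, map_zero]
    exact smul_zero _
  rw [sum_filter_of_ne (p := (c · ≠ 0)) fun j _ hj hcj => hj (hterm j hcj)]
  simp only [← pow_mul']
  exact mem_ker_quasiBCHSyndrome_iff.mp hc i hi1 (hi2.trans hS)

end QuasiBCH

theorem quasiBCH_parameters_general
    (F E : Type*) [Field F] [Field E] [Algebra F E]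
    [FiniteDimensional F E]
    (m ℓ s δ : ℕ) (hs : Module.finrank F E = s)
    (A : Matrix (Fin ℓ) (Fin ℓ) E)
    (hA1 : A ^ m = 1)
    (hA3 : ∀ i j : ℕ, i < m → j < m → i ≠ j → IsUnit (A ^ i - A ^ j)) :
    ∃ C : Submodule F (Fin m → Fin ℓ → F),
      (∀ c, c ∈ C ↔ ∀ i : ℕ, 1 ≤ i → i ≤ δ - 1 →
        ∑ j : Fin m, (A ^ (i * j.val)).mulVec (fun t => algebraMap F E (c j t)) = 0) ∧
      (m - s * (δ - 1)) * ℓ ≤ Module.finrank F C ∧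
      (∀ c ∈ C, c ≠ 0 → δ ≤ Nat.card {j : Fin m // c j ≠ 0}) := by
  refine ⟨ker (quasiBCHSyndrome F m A (δ - 1)), fun c => mem_ker_quasiBCHSyndrome_iff,
    hs ▸ finrank_ker_quasiBCHSyndrome A (δ - 1), fun c hc hc0 => ?_⟩
  have := lt_card_support_of_mem_ker_quasiBCHSyndrome hA1 hA3 hc hc0
  omega

/-- The quasi-BCH code `QBCH_q(m, ℓ, δ, A)` defined by a primitive `m`-th root
of unity `A ∈ M_ℓ(F_{q^s})` is an `F_q`-linear code of length `mℓ`, dimension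
at least `(m - s(δ-1))ℓ`, and `ℓ`-block minimum distance at least `δ`. -/
theorem quasiBCH_parameters
    (F E : Type*) [Field F] [Fintype F] [Field E] [Algebra F E]
    [FiniteDimensional F E]
    (m ℓ s δ : ℕ) (hs : Module.finrank F E = s)
    (hm : 0 < m) (hℓ : 0 < ℓ) (hδ : δ ≤ m)
    (A : Matrix (Fin ℓ) (Fin ℓ) E)
    (hA1 : A ^ m = 1)
    (hA2 : ∀ i : ℕ, 0 < i → i < m → A ^ i ≠ 1)
    (hA3 : ∀ i j : ℕ, i < m → j < m → i ≠ j → IsUnit (A ^ i - A ^ j)) :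
    ∃ C : Submodule F (Fin m → Fin ℓ → F),
      (∀ c, c ∈ C ↔ ∀ i : ℕ, 1 ≤ i → i ≤ δ - 1 →
        ∑ j : Fin m, (A ^ (i * j.val)).mulVec (fun t => algebraMap F E (c j t)) = 0) ∧
      (m - s * (δ - 1)) * ℓ ≤ Module.finrank F C ∧
      (∀ c ∈ C, c ≠ 0 → δ ≤ Nat.card {j : Fin m // c j ≠ 0}) :=
  quasiBCH_parameters_general F E m ℓ s δ hs A hA1 hA3
end

section
/- With A a primitive m-th root of unity in M_ℓ(F_{q^s}), let e ∈ (F_q^ℓ)^m with block support W and locator polynomial Λ(X) = Π_{i∈W}(1 − A^i X). Then for each 0 ≤ i ≤ m−1: e_i ≠ 0 if and only if Λ(A^{−i}) = 0 (the zero matrix). -/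
/-- The block support of an error vector. -/
def errSupp {F : Type*} [Zero F] [DecidableEq F] {m ℓ : ℕ} (e : Fin m → Fin ℓ → F) :
    Finset (Fin m) :=
  Finset.univ.filter (fun i => e i ≠ 0)

/-- The error vector viewed over the extension field `E`. -/
def eHat {F E : Type*} [Field F] [Field E] [Algebra F E] {m ℓ : ℕ}
    (e : Fin m → Fin ℓ → F) : Fin m → Fin ℓ → E :=
  fun j t => algebraMap F E (e j t)

/-- The locator polynomial `Λ(X) = ∏_{i ∈ W} (1 - A^i X)`. -/
noncomputable def locator {E : Type*} [Field E] {m ℓ : ℕ} (A : Matrix (Fin ℓ) (Fin ℓ) E)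
    (W : Finset (Fin m)) : Polynomial (Matrix (Fin ℓ) (Fin ℓ) E) :=
  ((W.sort (· ≤ ·)).map fun i =>
    1 - Polynomial.C (A ^ i.val) * Polynomial.X).prod

/-- The factor `∏_{j ∈ W, j ≠ i} A^i (1 - A^j X)` of the evaluator polynomial. -/
noncomputable def evalFactor {E : Type*} [Field E] {m ℓ : ℕ} (A : Matrix (Fin ℓ) (Fin ℓ) E)
    (W : Finset (Fin m)) (i : Fin m) : Polynomial (Matrix (Fin ℓ) (Fin ℓ) E) :=
  (((W.erase i).sort (· ≤ ·)).map fun j =>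
    Polynomial.C (A ^ i.val) * (1 - Polynomial.C (A ^ j.val) * Polynomial.X)).prod

/-- The `k`-th vector coefficient of the evaluator polynomial
`L(X) = ∑_{i ∈ W} (∏_{j ∈ W, j ≠ i} A^i (1 - A^j X)) ⋄ e_i`. -/
noncomputable def evaluatorCoeff {F E : Type*} [Field F] [Field E] [Algebra F E] [DecidableEq F]
    {m ℓ : ℕ} (A : Matrix (Fin ℓ) (Fin ℓ) E) (e : Fin m → Fin ℓ → F) (k : ℕ) :
    Fin ℓ → E :=
  ∑ i ∈ errSupp e, ((evalFactor A (errSupp e) i).coeff k).mulVec (eHat e i)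

/-- The `j`-th coefficient `S_{A^{j+1}}(e)` of the syndrome series `S_∞(X)`. -/
def syndromeCoeff {F E : Type*} [Field F] [Field E] [Algebra F E]
    {m ℓ : ℕ} (A : Matrix (Fin ℓ) (Fin ℓ) E) (e : Fin m → Fin ℓ → F) (j : ℕ) :
    Fin ℓ → E :=
  ∑ i : Fin m, (A ^ (i.val * (j + 1))).mulVec (eHat e i)

/-! For `i ∉ W` every factor `1 - A^j A^{-i} = A^{-i} (A^i - A^j)` of `Λ(A^{-i})` is invertible,
so `Λ(A^{-i})` is a unit and hence nonzero; for `i ∈ W` the factor `1 - A^i A^{-i}` vanishes. -/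

theorem Polynomial.eval_list_prod_one_sub_C_mul_X {R ι : Type*} [Ring R] (l : List ι) (f : ι → R)
    {x : R} (hx : ∀ i ∈ l, Commute (f i) x) :
    (l.map fun i => 1 - C (f i) * X).prod.eval x = (l.map fun i => 1 - f i * x).prod := by
  rw [Polynomial.eval, Polynomial.eval₂_list_prod_noncomm, List.map_map]
  · exact congrArg List.prod (List.map_congr_left fun i _ => by simp)
  · rintro p hp k
    obtain ⟨i, hi, rfl⟩ := List.mem_map.1 hp
    rw [coeff_sub, coeff_one, coeff_C_mul, coeff_X]
    split_ifs <;> simp [hx i hi]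

theorem isUnit_one_sub_pow_mul_pow_sub {R : Type*} [Ring R] {A : R} {m i j : ℕ} (hA : A ^ m = 1)
    (hi : i < m) (hij : IsUnit (A ^ i - A ^ j)) : IsUnit (1 - A ^ j * A ^ (m - i)) := by
  have hfactor : 1 - A ^ j * A ^ (m - i) = A ^ (m - i) * (A ^ i - A ^ j) := by
    rw [mul_sub, ← pow_add, ← pow_add, ← pow_add, Nat.sub_add_cancel hi.le, hA, Nat.add_comm j]
  rw [hfactor]
  exact ((IsUnit.of_pow_eq_one hA (by omega)).pow _).mul hij

theorem eval_locator {E : Type*} [Field E] {m ℓ : ℕ} (A B : Matrix (Fin ℓ) (Fin ℓ) E)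
    (hAB : Commute A B) (W : Finset (Fin m)) :
    (locator A W).eval B = ((W.sort (· ≤ ·)).map fun j => 1 - A ^ j.val * B).prod :=
  Polynomial.eval_list_prod_one_sub_C_mul_X _ _ fun _ _ => hAB.pow_left _

theorem eval_locator_pow_sub_eq_zero_iff {E : Type*} [Field E] {m ℓ : ℕ} (hℓ : 0 < ℓ)
    {A : Matrix (Fin ℓ) (Fin ℓ) E} (hA1 : A ^ m = 1)
    (hA3 : ∀ i j : ℕ, i < m → j < m → i ≠ j → IsUnit (A ^ i - A ^ j))
    (W : Finset (Fin m)) (i : Fin m) :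
    (locator A W).eval (A ^ (m - i.val)) = 0 ↔ i ∈ W := by
  have : Nonempty (Fin ℓ) := ⟨⟨0, hℓ⟩⟩
  rw [eval_locator _ _ (Commute.self_pow A _)]
  constructor
  · intro hzero
    by_contra hi
    refine (List.prod_isUnit fun x hx => ?_).ne_zero hzero
    obtain ⟨j, hj, rfl⟩ := List.mem_map.1 hx
    have hji : j.val ≠ i.val := fun h => hi (Fin.ext h ▸ (W.mem_sort _).1 hj)
    exact isUnit_one_sub_pow_mul_pow_sub hA1 i.isLt (hA3 _ _ i.isLt j.isLt hji.symm)
  · intro hi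
    refine List.prod_eq_zero (List.mem_map.2 ⟨i, (W.mem_sort _).2 hi, ?_⟩)
    rw [← pow_add, Nat.add_sub_cancel' i.isLt.le, hA1, sub_self]

theorem locator_roots_iff_error_general
    (F E : Type*) [Field F] [DecidableEq F] [Field E] [Algebra F E]
    (m ℓ : ℕ) (hℓ : 0 < ℓ)
    (A : Matrix (Fin ℓ) (Fin ℓ) E)
    (hA1 : A ^ m = 1)
    (hA3 : ∀ i j : ℕ, i < m → j < m → i ≠ j → IsUnit (A ^ i - A ^ j))
    (e : Fin m → Fin ℓ → F) :
    ∀ i : Fin m, e i ≠ 0 ↔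
      Polynomial.eval (A ^ (m - i.val)) (locator A (errSupp e)) = 0 := by
  intro i
  rw [eval_locator_pow_sub_eq_zero_iff hℓ hA1 hA3, errSupp, Finset.mem_filter]
  simp

/-- Roots of the locator polynomial locate the errors: `e_i ≠ 0` if and only if
`Λ(A^{-i}) = 0`, where `A^{-i} = A^{m-i}`. -/
theorem locator_roots_iff_error
    (F E : Type*) [Field F] [Fintype F] [DecidableEq F] [Field E] [Algebra F E]
    (m ℓ : ℕ) (hm : 0 < m) (hℓ : 0 < ℓ)
    (A : Matrix (Fin ℓ) (Fin ℓ) E)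
    (hA1 : A ^ m = 1)
    (hA2 : ∀ i : ℕ, 0 < i → i < m → A ^ i ≠ 1)
    (hA3 : ∀ i j : ℕ, i < m → j < m → i ≠ j → IsUnit (A ^ i - A ^ j))
    (e : Fin m → Fin ℓ → F) :
    ∀ i : Fin m, e i ≠ 0 ↔
      Polynomial.eval (A ^ (m - i.val)) (locator A (errSupp e)) = 0 :=
  locator_roots_iff_error_general F E m ℓ hℓ A hA1 hA3 e
end

section
/- With A a primitive m-th root of unity in M_ℓ(F_{q^s}), let e ∈ (F_q^ℓ)^m have block support W, and let L(X) = Σ_{i∈W}(Π_{j∈W, j≠i} A^i(1 − A^j X)) ⋄ e_i be the evaluator polynomial. Then for every i ∈ W, e_i = (Π_{j∈W\{i}} (A^i − A^j)^{−1}) · L(A^{−i}), where L(A^{−i}) = Σ_k (A^{−i})^k L_k with L_k the vector coefficients of L. -/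
/-! At `X = A^{m-i} = A^{-i}` the `i'`-th summand of the evaluator vanishes for `i' ≠ i`, because
it contains the factor `1 - A^i X`, while the `i`-th summand becomes
`∏_{j ≠ i} A^i (1 - A^j A^{-i}) = ∏_{j ≠ i} (A^i - A^j)`, which the commuting units
`(A^i - A^j)⁻¹` cancel. Evaluation is multiplicative here although matrices do not commute,
since every coefficient in sight is a polynomial in `A` and so commutes with `A^{m-i}`. -/

open Polynomial

namespace Polynomial

variable {R : Type*} [Semiring R]

theorem commute_coeff_mul {p q : R[X]} {x : R} (hp : ∀ k, Commute (p.coeff k) x)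
    (hq : ∀ k, Commute (q.coeff k) x) (k : ℕ) : Commute ((p * q).coeff k) x := by
  rw [coeff_mul]
  exact Commute.sum_left _ _ _ fun ij _ => (hp ij.1).mul_left (hq ij.2)

theorem commute_coeff_list_prod {ps : List R[X]} {x : R}
    (h : ∀ p ∈ ps, ∀ k, Commute (p.coeff k) x) (k : ℕ) : Commute (ps.prod.coeff k) x := by
  induction ps generalizing k with
  | nil =>
    rw [List.prod_nil, coeff_one]
    split_ifs
    exacts [Commute.one_left x, Commute.zero_left x]
  | cons p ps ih =>
    rw [List.prod_cons]
    exact commute_coeff_mul (h p List.mem_cons_self)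
      (ih fun q hq => h q (List.mem_cons_of_mem _ hq)) k

theorem sum_range_pow_mul_coeff {p : R[X]} {n : ℕ} (hn : p.natDegree < n) {x : R}
    (h : ∀ k, Commute (p.coeff k) x) : ∑ k ∈ Finset.range n, x ^ k * p.coeff k = p.eval x := by
  rw [eval_eq_sum_range' hn]
  exact Finset.sum_congr rfl fun k _ => ((h k).pow_right k).eq.symm

theorem commute_coeff_C_mul_one_sub_C_mul_X {R : Type*} [Ring R] {a b x : R}
    (ha : Commute a x) (hb : Commute b x) (k : ℕ) :
    Commute ((C a * (1 - C b * X)).coeff k) x := by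
  rw [coeff_C_mul, coeff_sub, coeff_one, coeff_C_mul_X]
  refine ha.mul_left (Commute.sub_left ?_ ?_) <;> split_ifs
  exacts [Commute.one_left x, Commute.zero_left x, hb, Commute.zero_left x]

end Polynomial

theorem Matrix.list_prod_map_inv_mul_list_prod {ι n α : Type*} [Fintype n] [DecidableEq n]
    [CommRing α] (l : List ι) (f : ι → Matrix n n α) (hu : ∀ i ∈ l, IsUnit (f i))
    (hc : ∀ i j, Commute (f i) (f j)) :
    (l.map fun i => (f i)⁻¹).prod * (l.map f).prod = 1 := by
  have hrev : (l.map f).reverse.prod = (l.map f).prod :=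
    (List.reverse_perm _).prod_eq' ((List.pairwise_reverse.mpr
      (List.pairwise_map.mpr (List.pairwise_of_forall fun i j => hc j i))))
  have hinv : (l.map fun i => (f i)⁻¹).prod = (l.map f).prod⁻¹ := by
    rw [← hrev, list_prod_inv_reverse, List.reverse_reverse, List.map_map]
    rfl
  rw [hinv, nonsing_inv_mul]
  exact (isUnit_iff_isUnit_det _).mp (List.prod_isUnit (List.forall_mem_map.mpr hu))

section Evaluator

variable {E : Type*} [Field E] {m ℓ : ℕ} {A B : Matrix (Fin ℓ) (Fin ℓ) E}

theorem natDegree_evalFactor_le (W : Finset (Fin m)) (i : Fin m) : (evalFactor A W i).natDegree ≤ (W.erase i).card := by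
  refine (natDegree_list_prod_le _).trans ?_
  rw [List.map_map, ← Finset.length_sort (· ≤ ·)]
  refine (List.sum_le_card_nsmul _ 1 fun d hd => ?_).trans (by simp)
  obtain ⟨j, -, rfl⟩ := List.mem_map.mp hd
  exact (natDegree_C_mul_le _ _).trans ((natDegree_sub_le _ _).trans
    (max_le (by simp) ((natDegree_C_mul_le _ _).trans natDegree_X_le)))

theorem commute_coeff_evalFactor (hAB : Commute A B) (W : Finset (Fin m)) (i : Fin m)
    (k : ℕ) : Commute ((evalFactor A W i).coeff k) B := by
  refine commute_coeff_list_prod (fun p hp k => ?_) k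
  obtain ⟨j, -, rfl⟩ := List.mem_map.mp hp
  exact commute_coeff_C_mul_one_sub_C_mul_X (hAB.pow_left _) (hAB.pow_left _) k

theorem eval_evalFactor (hAB : Commute A B) (W : Finset (Fin m)) (i : Fin m) :
    (evalFactor A W i).eval B =
      (((W.erase i).sort (· ≤ ·)).map fun j => A ^ i.val * (1 - A ^ j.val * B)).prod := by
  rw [evalFactor, ← eval₂_id, eval₂_list_prod_noncomm, List.map_map]
  · simp only [Function.comp_def, eval₂_id, eval_C_mul, eval_sub, eval_one, eval_X]
  · intro p hp k
    obtain ⟨j, -, rfl⟩ := List.mem_map.mp hp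
    exact commute_coeff_C_mul_one_sub_C_mul_X (hAB.pow_left _) (hAB.pow_left _) k

theorem eval_evalFactor_eq_zero (hAB : Commute A B) {W : Finset (Fin m)} {i i' : Fin m}
    (hB : A ^ i.val * B = 1) (hi : i ∈ W) (hne : i' ≠ i) : (evalFactor A W i').eval B = 0 := by
  rw [eval_evalFactor hAB]
  refine List.prod_eq_zero (List.mem_map.mpr ⟨i, ?_, by rw [hB, sub_self, mul_zero]⟩)
  exact (Finset.mem_sort _).mpr (Finset.mem_erase.mpr ⟨hne.symm, hi⟩)

theorem eval_evalFactor_self (hAB : Commute A B) (W : Finset (Fin m)) {i : Fin m}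
    (hB : A ^ i.val * B = 1) :
    (evalFactor A W i).eval B =
      (((W.erase i).sort (· ≤ ·)).map fun j => A ^ i.val - A ^ j.val).prod := by
  rw [eval_evalFactor hAB]
  congr 1
  refine List.map_congr_left fun j _ => ?_
  rw [mul_sub, mul_one, ← mul_assoc, ((Commute.refl A).pow_pow _ _).eq, mul_assoc, hB, mul_one]

theorem sum_pow_mulVec_evaluatorCoeff {F : Type*} [Field F] [Algebra F E] [DecidableEq F]
    (hAB : Commute A B) (e : Fin m → Fin ℓ → F) :
    ∑ k ∈ Finset.range (errSupp e).card, (B ^ k).mulVec (evaluatorCoeff A e k) =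
      ∑ i ∈ errSupp e, ((evalFactor A (errSupp e) i).eval B).mulVec (eHat e i) := by
  simp only [evaluatorCoeff, Matrix.mulVec_sum, Matrix.mulVec_mulVec]
  rw [Finset.sum_comm]
  refine Finset.sum_congr rfl fun i hi => ?_
  rw [← Matrix.sum_mulVec, sum_range_pow_mul_coeff _ (commute_coeff_evalFactor hAB _ _)]
  exact (natDegree_evalFactor_le _ i).trans_lt (Finset.card_erase_lt_of_mem hi)

end Evaluator

theorem error_evaluation_general
    (F E : Type*) [Field F] [DecidableEq F] [Field E] [Algebra F E]
    (m ℓ : ℕ)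
    (A : Matrix (Fin ℓ) (Fin ℓ) E)
    (hA1 : A ^ m = 1)
    (hA3 : ∀ i j : ℕ, i < m → j < m → i ≠ j → IsUnit (A ^ i - A ^ j))
    (e : Fin m → Fin ℓ → F) :
    ∀ i ∈ errSupp e,
      eHat e i =
        ((((errSupp e).erase i).sort (· ≤ ·)).map fun j =>
            (A ^ i.val - A ^ j.val)⁻¹).prod.mulVec
          (∑ k ∈ Finset.range (errSupp e).card,
            ((A ^ (m - i.val)) ^ k).mulVec (evaluatorCoeff A e k)) := by
  intro i hi
  have hAB : Commute A (A ^ (m - i.val)) := (Commute.refl A).pow_right _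
  have hB : A ^ i.val * A ^ (m - i.val) = 1 := by
    rw [← pow_add, Nat.add_sub_cancel' i.isLt.le, hA1]
  rw [sum_pow_mulVec_evaluatorCoeff hAB, Finset.sum_eq_single_of_mem i hi fun i' _ hne => by
      rw [eval_evalFactor_eq_zero hAB hB hi hne, Matrix.zero_mulVec],
    eval_evalFactor_self hAB _ hB, Matrix.mulVec_mulVec,
    Matrix.list_prod_map_inv_mul_list_prod, Matrix.one_mulVec]
  · intro j hj
    have hji : j ≠ i := Finset.ne_of_mem_erase ((Finset.mem_sort _).mp hj)
    exact hA3 _ _ i.isLt j.isLt fun h => hji (Fin.ext h.symm)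
  · have hpow : ∀ a b : ℕ, Commute (A ^ a) (A ^ b) := (Commute.refl A).pow_pow
    exact fun j j' => ((hpow _ _).sub_left (hpow _ _)).sub_right ((hpow _ _).sub_left (hpow _ _))

/-- Error evaluation: for `i` in the support `W` of the error,
`e_i = (∏_{j ∈ W, j ≠ i} (A^i - A^j)^{-1}) · L(A^{-i})`, where
`L(A^{-i}) = ∑_k (A^{-i})^k L_k` and `A^{-i} = A^{m-i}`. -/
theorem error_evaluation
    (F E : Type*) [Field F] [Fintype F] [DecidableEq F] [Field E] [Algebra F E]
    (m ℓ : ℕ) (hm : 0 < m) (hℓ : 0 < ℓ)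
    (A : Matrix (Fin ℓ) (Fin ℓ) E)
    (hA1 : A ^ m = 1)
    (hA2 : ∀ i : ℕ, 0 < i → i < m → A ^ i ≠ 1)
    (hA3 : ∀ i j : ℕ, i < m → j < m → i ≠ j → IsUnit (A ^ i - A ^ j))
    (e : Fin m → Fin ℓ → F) :
    ∀ i ∈ errSupp e,
      eHat e i =
        ((((errSupp e).erase i).sort (· ≤ ·)).map fun j =>
            (A ^ i.val - A ^ j.val)⁻¹).prod.mulVec
          (∑ k ∈ Finset.range (errSupp e).card,
            ((A ^ (m - i.val)) ^ k).mulVec (evaluatorCoeff A e k)) :=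
  error_evaluation_general F E m ℓ A hA1 hA3 e
end

section
/- Let q be a prime power, m = q^ℓ − 1, A ∈ M_ℓ(F_q) a primitive m-th root of unity, k ≤ m, and π : F_q[A] → F_q^ℓ an F_q-linear map. Then the code C_{A,k,π} = {(π(P(A^0)), π(P(A^1)), ..., π(P(A^{m−1}))) : P ∈ F_q[A][X], deg P < k} is an ℓ-quasi-cyclic code over F_q of length mℓ and F_q-dimension at least kℓ − dim_{F_q}(ker π^{×m} restricted to the image of the evaluation map). -/
/-!
The code is the image under `π^{×m}` of the space `V` of evaluation vectors `(P(A^t))_{t<m}`.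
Multiplying the `i`-th coefficient of `P` by `A^i` gives a polynomial whose value at `A^t` is
`P(A^{t+1})`, and `A^m = 1`, so `V`, and with it the code, is closed under the cyclic shift.
Evaluation at `A^0, …, A^{k-1}` is injective on coefficient vectors over the commutative ring
`F[A]`: the Vandermonde determinant is a product of differences `A^j - A^i`, which are
non-zero-divisors. Hence `dim V = k · dim F[A]`. Since `A` has multiplicative order
`m = q^ℓ - 1` in `F[A]`, this ring has more than `m` elements, so `dim F[A] ≥ ℓ`, and rank–nullity
for `π^{×m}` restricted to `V` gives the bound.
-/

open Polynomial nonZeroDivisors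

namespace Matrix

variable {R : Type*} [CommRing R] {n : ℕ}

theorem det_vandermonde_mem_nonZeroDivisors {v : Fin n → R}
    (hv : Pairwise fun i j => v i - v j ∈ R⁰) : (vandermonde v).det ∈ R⁰ := by
  rw [det_vandermonde]
  exact prod_mem fun i _ => prod_mem fun j hj => hv (Finset.mem_Ioi.mp hj).ne'

theorem eq_zero_of_forall_index_sum_mul_pow_eq_zero_of_pairwise_sub_mem {c v : Fin n → R}
    (hv : Pairwise fun i j => v i - v j ∈ R⁰) (h : ∀ t, ∑ i, c i * v t ^ (i : ℕ) = 0) :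
    c = 0 :=
  eq_zero_of_det_mem_nonZeroDivisors_of_mulVec_eq_zero (det_vandermonde_mem_nonZeroDivisors hv)
    (funext fun t => by simpa [mulVec, dotProduct, mul_comm] using h t)

end Matrix

section evalAtPoints

variable {F M ι : Type*} [CommRing F] [Ring M] [Algebra F M] (S : Subalgebra F M) (k : ℕ)

def evalAtPoints (x : ι → M) : (Fin k → S) →ₗ[F] (ι → M) where
  toFun c t := ∑ i : Fin k, (c i : M) * x t ^ (i : ℕ)
  map_add' c d := by funext t; simp [add_mul, Finset.sum_add_distrib]
  map_smul' r c := by funext t; simp [Finset.smul_sum]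

variable {S k}

theorem evalAtPoints_apply (x : ι → M) (c : Fin k → S) (t : ι) :
    evalAtPoints S k x c t = ∑ i : Fin k, (c i : M) * x t ^ (i : ℕ) := rfl

theorem mem_range_evalAtPoints_iff (x : ι → M) (v : ι → M) :
    v ∈ LinearMap.range (evalAtPoints S k x) ↔
      ∃ P : M[X], (∀ i, P.coeff i ∈ S) ∧ P.degree < k ∧ ∀ t, v t = P.eval (x t) := by
  constructor
  · rintro ⟨c, rfl⟩
    refine ⟨∑ i : Fin k, C (c i : M) * X ^ (i : ℕ), fun n => ?_, degree_sum_fin_lt _, fun t => ?_⟩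
    · simp only [finsetSum_coeff, coeff_C_mul_X_pow]
      exact Subalgebra.sum_mem _ fun i _ => by split_ifs <;> simp
    · simp [evalAtPoints_apply, eval_finsetSum]
  · rintro ⟨P, hcoeff, hdeg, hv⟩
    refine ⟨fun i => ⟨P.coeff i, hcoeff i⟩, funext fun t => ?_⟩
    rw [hv, eval_eq_sum, evalAtPoints_apply, ← sum_fin _ (by simp) hdeg]

theorem shift_mem_range_evalAtPoints_pow {m : ℕ} {a : S} (ha : a ^ m = 1) {v : Fin m → M}
    (hv : v ∈ LinearMap.range (evalAtPoints S k fun t : Fin m => (a : M) ^ (t : ℕ))) :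
    (fun t : Fin m => v ⟨(t + 1) % m, Nat.mod_lt _ t.pos⟩) ∈
      LinearMap.range (evalAtPoints S k fun t : Fin m => (a : M) ^ (t : ℕ)) := by
  obtain ⟨c, rfl⟩ := hv
  have ha' : (a : M) ^ m = 1 := by simpa using congrArg Subtype.val ha
  refine ⟨fun i => c i * a ^ (i : ℕ), funext fun t => ?_⟩
  simp only [evalAtPoints_apply]
  refine Finset.sum_congr rfl fun i _ => ?_
  rw [← pow_eq_pow_mod _ ha', Subalgebra.coe_mul, SubmonoidClass.coe_pow, mul_assoc, ← pow_mul,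
    ← pow_mul, ← pow_add, add_one_mul, add_comm]

open scoped IsMulCommutative in
theorem evalAtPoints_pow_injective [IsMulCommutative S] {m : ℕ} (hk : k ≤ m) (a : S)
    (ha : ∀ i j : ℕ, i < m → j < m → i ≠ j → IsUnit ((a : M) ^ i - (a : M) ^ j)) :
    Function.Injective (evalAtPoints S k fun t : Fin m => (a : M) ^ (t : ℕ)) := by
  rw [← LinearMap.ker_eq_bot, LinearMap.ker_eq_bot']
  intro c hc
  refine Matrix.eq_zero_of_forall_index_sum_mul_pow_eq_zero_of_pairwise_sub_mem
    (v := fun i : Fin k => a ^ (i : ℕ)) (fun i j hij => ?_) fun t => Subtype.val_injective ?_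
  · refine mem_nonZeroDivisors_of_injective (f := S.val) Subtype.val_injective ?_
    simpa using
      (ha i j (i.2.trans_le hk) (j.2.trans_le hk) (Fin.val_ne_of_ne hij)).mem_nonZeroDivisors
  · simpa [evalAtPoints_apply, ← pow_mul] using congrFun hc (Fin.castLE hk t)

end evalAtPoints

theorem le_finrank_of_card_pow_le_natCard {K V : Type*} [Field K] [Fintype K] [AddCommGroup V]
    [Module K V] [Module.Finite K V] {ℓ : ℕ} (h : Fintype.card K ^ ℓ ≤ Nat.card V) :
    ℓ ≤ Module.finrank K V := by
  rwa [Module.natCard_eq_pow_finrank (K := K), Nat.card_eq_fintype_card,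
    Nat.pow_le_pow_iff_right Fintype.one_lt_card] at h

/-- The quasi-cyclic evaluation code `C_{A,k,π}`: with `m = q^ℓ - 1`, `A` a
primitive `m`-th root of unity in `M_ℓ(F_q)`, `k ≤ m` and `π : F_q[A] → F_q^ℓ`
an `F_q`-linear map, the code obtained by evaluating polynomials over `F_q[A]`
of degree `< k` at `A^0, …, A^{m-1}` and applying `π` componentwise is an
`ℓ`-quasi-cyclic code of length `mℓ` and `F_q`-dimension at least
`kℓ - dim ker(π^{×m}∣_{im ev_A})`. -/
theorem quasiCyclic_evaluation_code
    (F : Type*) [Field F] [Fintype F] (ℓ m k : ℕ) (hℓ : 0 < ℓ)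
    (hm : m + 1 = Fintype.card F ^ ℓ) (hk : k ≤ m)
    (A : Matrix (Fin ℓ) (Fin ℓ) F)
    (hA1 : A ^ m = 1)
    (hA2 : ∀ i : ℕ, 0 < i → i < m → A ^ i ≠ 1)
    (hA3 : ∀ i j : ℕ, i < m → j < m → i ≠ j → IsUnit (A ^ i - A ^ j))
    (π : Matrix (Fin ℓ) (Fin ℓ) F →ₗ[F] (Fin ℓ → F)) :
    ∃ C : Submodule F (Fin m → Fin ℓ → F),
      (∀ c, c ∈ C ↔ ∃ P : Polynomial (Matrix (Fin ℓ) (Fin ℓ) F),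
        (∀ i, P.coeff i ∈ Algebra.adjoin F {A}) ∧ P.degree < (k : ℕ) ∧
        ∀ t : Fin m, c t = π (Polynomial.eval (A ^ t.val) P)) ∧
      (∀ c ∈ C, (fun t : Fin m => c ⟨(t.val + 1) % m, Nat.mod_lt _ t.pos⟩) ∈ C) ∧
      ∃ V : Submodule F (Fin m → Matrix (Fin ℓ) (Fin ℓ) F),
        (∀ v, v ∈ V ↔ ∃ P : Polynomial (Matrix (Fin ℓ) (Fin ℓ) F),
          (∀ i, P.coeff i ∈ Algebra.adjoin F {A}) ∧ P.degree < (k : ℕ) ∧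
          ∀ t : Fin m, v t = Polynomial.eval (A ^ t.val) P) ∧
        k * ℓ - Module.finrank F
            (LinearMap.ker
              ((LinearMap.pi fun t : Fin m =>
                π ∘ₗ LinearMap.proj t).domRestrict V)) ≤
          Module.finrank F C := by
  set S := Algebra.adjoin F {A}
  set a : S := ⟨A, Algebra.self_mem_adjoin_singleton F A⟩
  set ev := evalAtPoints S k fun t : Fin m => (a : Matrix (Fin ℓ) (Fin ℓ) F) ^ (t : ℕ)
  set πm := LinearMap.pi fun t : Fin m => π ∘ₗ LinearMap.proj t
  refine ⟨(LinearMap.range ev).map πm, fun c => ?_, ?_, LinearMap.range ev,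
    mem_range_evalAtPoints_iff _, ?_⟩
  · constructor
    · rintro ⟨v, hv, rfl⟩
      obtain ⟨P, hcoeff, hdeg, hv⟩ := (mem_range_evalAtPoints_iff _ v).1 hv
      exact ⟨P, hcoeff, hdeg, fun t => congrArg π (hv t)⟩
    · rintro ⟨P, hcoeff, hdeg, hc⟩
      exact ⟨_, (mem_range_evalAtPoints_iff _ _).2 ⟨P, hcoeff, hdeg, fun t => rfl⟩,
        funext fun t => (hc t).symm⟩
  · rintro c ⟨v, hv, rfl⟩
    exact ⟨_, shift_mem_range_evalAtPoints_pow (Subtype.ext hA1) hv, rfl⟩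
  · have hm0 : 0 < m := by have := Nat.one_lt_pow hℓ.ne' (Fintype.one_lt_card (α := F)); omega
    have hord : orderOf a = m := by
      rw [← orderOf_injective S.val.toMonoidHom Subtype.val_injective a]
      exact (orderOf_eq_iff hm0).2 ⟨hA1, fun i hi h0 => hA2 i h0 hi⟩
    -- `orderOf_lt_card` needs `S` nontrivial, which holds because `ℓ > 0`
    have : Nonempty (Fin ℓ) := ⟨⟨0, hℓ⟩⟩
    have hcard : m < Nat.card S := hord ▸ orderOf_lt_card a
    have hS : ℓ ≤ Module.finrank F S := le_finrank_of_card_pow_le_natCard (hm ▸ hcard)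
    have hV : Module.finrank F (LinearMap.range ev) = k * Module.finrank F S := by
      rw [LinearMap.finrank_range_of_inj (evalAtPoints_pow_injective hk a hA3),
        Module.finrank_pi_fintype]
      simp
    have hrank := LinearMap.finrank_range_add_finrank_ker (πm.domRestrict (LinearMap.range ev))
    rw [LinearMap.range_domRestrict] at hrank
    have := Nat.mul_le_mul_left k hS
    omega
end

section
/- Let q be a prime power, m = q^ℓ − 1, A ∈ M_ℓ(F_q) a primitive m-th root of unity, k ≤ m, and let π : F_q[A] → F_q^ℓ send a matrix B = (b_{ij}) to its i-th row (b_{i1},...,b_{iℓ}) for some fixed i (or to its j-th column for some fixed j). Then π is an F_q-linear bijection, and the code C_{A,k,π} has dimension exactly kℓ over F_q and minimum Hamming distance at least m − k + 1. -/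
/-! By Cayley–Hamilton `F[A]` has dimension at most `ℓ` over `F`, hence at most `q^ℓ = m + 1`
elements; as `0, A^0, …, A^(m-1)` are `m + 1` distinct elements of it, they are all of them. So
every nonzero element of `F[A]` is invertible: it has no zero row or column, and `F[A]` is a
commutative domain of `F`-dimension `ℓ`. The code is a Reed–Solomon code over `F[A]` read
through the injective map `π`: a nonzero polynomial of degree `< k` vanishes at fewer than `k` of
the distinct points `A^t`, which gives both the dimension `kℓ` and the distance bound. -/

open Polynomial Module
open scoped IsMulCommutative

namespace Matrix

variable {n R : Type*} [Fintype n] [DecidableEq n]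

theorem row_ne_zero_of_isUnit [Semiring R] [Nontrivial R] {B : Matrix n n R} (hB : IsUnit B)
    (i : n) : B i ≠ 0 := by
  obtain ⟨C, hC⟩ := hB.exists_right_inv
  intro h
  simpa [mul_apply, h] using congr_fun (congr_fun hC i) i

theorem col_ne_zero_of_isUnit [Semiring R] [Nontrivial R] {B : Matrix n n R} (hB : IsUnit B)
    (j : n) : (fun i => B i j) ≠ 0 := by
  obtain ⟨C, hC⟩ := hB.exists_left_inv
  intro h
  simpa [mul_apply, funext_iff.1 h] using congr_fun (congr_fun hC j) j

theorem aeval_mem_span_pow [CommRing R] [Nontrivial R] (A : Matrix n n R) (p : R[X]) :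
    aeval A p ∈ Submodule.span R (Set.range fun i : Fin (Fintype.card n) => A ^ (i : ℕ)) := by
  rw [← aeval_modByMonic_eq_self_of_root A.aeval_self_charpoly, aeval_eq_sum_range]
  refine Submodule.sum_mem _ fun i _ => ?_
  by_cases hi : i < Fintype.card n
  · exact Submodule.smul_mem _ _ (Submodule.subset_span ⟨⟨i, hi⟩, rfl⟩)
  · rw [coeff_eq_zero_of_degree_lt, zero_smul]
    · exact Submodule.zero_mem _
    calc degree (p %ₘ A.charpoly) < degree A.charpoly := degree_modByMonic_lt _ A.charpoly_monic
      _ = Fintype.card n := A.charpoly_degree_eq_dim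
      _ ≤ i := by exact_mod_cast not_lt.1 hi

theorem finrank_adjoin_le {F : Type*} [Field F] (A : Matrix n n F) :
    finrank F (Algebra.adjoin F {A}) ≤ Fintype.card n := by
  have hle : Subalgebra.toSubmodule (Algebra.adjoin F {A}) ≤
      Submodule.span F (Set.range fun i : Fin (Fintype.card n) => A ^ (i : ℕ)) := by
    rintro _ hB
    rw [Subalgebra.mem_toSubmodule, Algebra.adjoin_singleton_eq_range_aeval] at hB
    obtain ⟨p, rfl⟩ := hB
    exact aeval_mem_span_pow A p
  calc finrank F (Algebra.adjoin F {A}) ≤ _ := Submodule.finrank_mono hle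
    _ ≤ Fintype.card n := (finrank_range_le_card (R := F) _).trans_eq (Fintype.card_fin _)

theorem natCard_adjoin_le {F : Type*} [Field F] [Fintype F] (A : Matrix n n F) :
    Nat.card (Algebra.adjoin F {A}) ≤ Fintype.card F ^ Fintype.card n := by
  rw [Module.natCard_eq_pow_finrank (K := F), Nat.card_eq_fintype_card]
  exact Nat.pow_le_pow_right Fintype.card_pos A.finrank_adjoin_le

end Matrix

section Adjoin

variable {F R : Type*} [CommRing F] [Ring R] [Nontrivial R] [Algebra F R] {a : R} {m : ℕ}

theorem injective_pow_of_isUnit_sub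
    (h : ∀ i j : ℕ, i < m → j < m → i ≠ j → IsUnit (a ^ i - a ^ j)) :
    Function.Injective fun t : Fin m => a ^ (t : ℕ) := fun s t hst =>
  Fin.ext (by_contra fun hne => (h s t s.2 t.2 hne).ne_zero (sub_eq_zero.2 hst))

theorem zero_notMem_range_pow (ha : IsUnit a) : 0 ∉ Set.range fun t : Fin m => a ^ (t : ℕ) :=
  fun ⟨t, ht⟩ => (ha.pow t).ne_zero ht

theorem ncard_insert_zero_range_pow (ha : IsUnit a)
    (hinj : Function.Injective fun t : Fin m => a ^ (t : ℕ)) :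
    (insert 0 (Set.range fun t : Fin m => a ^ (t : ℕ))).ncard = m + 1 := by
  rw [Set.ncard_insert_of_notMem (zero_notMem_range_pow ha), Set.ncard_range_of_injective hinj,
    Nat.card_fin]

theorem Subalgebra.isDomain_of_isUnit {S : Subalgebra F R}
    (hS : ∀ x ∈ S, x ≠ 0 → IsUnit x) : IsDomain S :=
  have : NoZeroDivisors S := ⟨fun {x y} hxy => or_iff_not_imp_left.2 fun hx =>
    Subtype.ext ((hS x x.2 (by simpa using hx)).mul_right_eq_zero.1 (congrArg Subtype.val hxy))⟩
  NoZeroDivisors.to_isDomain S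

variable [Finite R]

theorem coe_adjoin_eq_insert_zero_range_pow (ha : IsUnit a)
    (hinj : Function.Injective fun t : Fin m => a ^ (t : ℕ))
    (hcard : Nat.card (Algebra.adjoin F {a}) ≤ m + 1) :
    (Algebra.adjoin F {a} : Set R) = insert 0 (Set.range fun t : Fin m => a ^ (t : ℕ)) := by
  refine (Set.eq_of_subset_of_ncard_le ?_ ?_ (Set.toFinite _)).symm
  · rintro _ (rfl | ⟨t, rfl⟩)
    · exact zero_mem _
    · exact pow_mem (Algebra.self_mem_adjoin_singleton F a) _
  · rwa [ncard_insert_zero_range_pow ha hinj]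

theorem isUnit_of_mem_adjoin (ha : IsUnit a)
    (hinj : Function.Injective fun t : Fin m => a ^ (t : ℕ))
    (hcard : Nat.card (Algebra.adjoin F {a}) ≤ m + 1) {b : R} (hb : b ∈ Algebra.adjoin F {a})
    (hb0 : b ≠ 0) : IsUnit b := by
  rw [← SetLike.mem_coe, coe_adjoin_eq_insert_zero_range_pow ha hinj hcard] at hb
  obtain ⟨t, rfl⟩ := hb.resolve_left hb0
  exact ha.pow _

theorem natCard_adjoin_eq (ha : IsUnit a)
    (hinj : Function.Injective fun t : Fin m => a ^ (t : ℕ))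
    (hcard : Nat.card (Algebra.adjoin F {a}) ≤ m + 1) :
    Nat.card (Algebra.adjoin F {a}) = m + 1 := by
  calc Nat.card (Algebra.adjoin F {a}) = (Algebra.adjoin F {a} : Set R).ncard :=
        Nat.card_coe_set_eq _
    _ = m + 1 := by
      rw [coe_adjoin_eq_insert_zero_range_pow ha hinj hcard, ncard_insert_zero_range_pow ha hinj]

end Adjoin

theorem finrank_eq_of_natCard_eq_pow {F V : Type*} [Field F] [Fintype F] [AddCommGroup V]
    [Module F V] [Module.Finite F V] {n : ℕ} (h : Nat.card V = Fintype.card F ^ n) :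
    finrank F V = n :=
  Nat.pow_right_injective Fintype.one_lt_card <| by
    simpa only [Nat.card_eq_fintype_card] using
      (Module.natCard_eq_pow_finrank (K := F)).symm.trans h

section EvaluationCode

variable {F K V ι : Type*} [Field F] [CommRing K] [Algebra F K] [AddCommGroup V] [Module F V]

noncomputable def evalCodeMap (α : ι → K) (π : K →ₗ[F] V) : K[X] →ₗ[F] ι → V where
  toFun p t := π (p.eval (α t))
  map_add' p q := by ext t; simp
  map_smul' c p := by ext t; simp

noncomputable def evalCode (α : ι → K) (π : K →ₗ[F] V) (k : ℕ) :
    Submodule F (ι → V) :=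
  ((degreeLT K k).restrictScalars F).map (evalCodeMap α π)

variable {α : ι → K} {π : K →ₗ[F] V} {k : ℕ}

theorem evalCodeMap_eq_zero_iff (hπ : Function.Injective π) {p : K[X]} {t : ι} :
    evalCodeMap α π p t = 0 ↔ p.eval (α t) = 0 :=
  map_eq_zero_iff π hπ

theorem Subalgebra.mem_evalCode_iff {R : Type*} [Ring R] [Algebra F R] {S : Subalgebra F R}
    [IsMulCommutative S] (α : ι → S) (π : R →ₗ[F] V) (k : ℕ) (c : ι → V) :
    c ∈ evalCode α (π ∘ₗ S.val.toLinearMap) k ↔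
      ∃ P : R[X], (∀ i, P.coeff i ∈ S) ∧ P.degree < k ∧
        ∀ t, c t = π (P.eval (α t : R)) := by
  have eval_map_val (p : S[X]) (x : S) : (p.map (S.val : S →+* R)).eval (x : R) = p.eval x :=
    (eval_map _ _).trans (eval₂_at_apply (S.val : S →+* R) x)
  constructor
  · rintro ⟨p, hp, rfl⟩
    refine ⟨p.map (S.val : S →+* R), fun i => by simp [coeff_map],
      degree_map_le.trans_lt (mem_degreeLT.1 hp),
      fun t => congrArg π (eval_map_val p (α t)).symm⟩
  · rintro ⟨P, hP, hdeg, hc⟩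
    obtain ⟨p, rfl⟩ := (mem_lifts P).1
      ((lifts_iff_coeff_lifts (f := (S.val : S →+* R)) P).2 fun n => ⟨⟨_, hP n⟩, rfl⟩)
    refine ⟨p, mem_degreeLT.2 ?_, funext fun t => ?_⟩
    · rwa [degree_map_eq_of_injective Subtype.val_injective] at hdeg
    · rw [hc t, eval_map_val]
      rfl

variable [IsDomain K] [Fintype ι]

theorem natCard_eval_eq_zero_lt (hα : Function.Injective α) {p : K[X]} (hp : p ∈ degreeLT K k)
    (hp0 : p ≠ 0) : Nat.card {t // p.eval (α t) = 0} < k := by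
  classical
  rw [Nat.card_eq_fintype_card]
  have hdeg : p.natDegree < k := (natDegree_lt_iff_degree_lt hp0).2 (mem_degreeLT.1 hp)
  by_contra! hk
  exact hp0 (eq_zero_of_natDegree_lt_card_of_eval_eq_zero p (hα.comp Subtype.val_injective)
    (fun t : {t // p.eval (α t) = 0} => t.2) (hdeg.trans_le hk))

theorem eq_zero_of_evalCodeMap_eq_zero (hα : Function.Injective α)
    (hπ : Function.Injective π) (hk : k ≤ Fintype.card ι) {p : K[X]} (hp : p ∈ degreeLT K k)
    (h : evalCodeMap α π p = 0) : p = 0 := by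
  by_contra hp0
  have hzero : ∀ t, p.eval (α t) = 0 := fun t => (evalCodeMap_eq_zero_iff hπ).1 (congr_fun h t)
  have := natCard_eval_eq_zero_lt hα hp hp0
  rw [Nat.card_congr (Equiv.subtypeUnivEquiv hzero), Nat.card_eq_fintype_card] at this
  omega

theorem finrank_evalCode [Module.Finite F K] (hα : Function.Injective α)
    (hπ : Function.Injective π) (hk : k ≤ Fintype.card ι) :
    finrank F (evalCode α π k) = k * finrank F K := by
  let D := (degreeLT K k).restrictScalars F
  have hinj : Function.Injective ((evalCodeMap α π).domRestrict D) :=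
    (injective_iff_map_eq_zero _).2 fun p hp =>
      Subtype.ext (eq_zero_of_evalCodeMap_eq_zero hα hπ hk p.2 hp)
  rw [evalCode, ← LinearMap.range_domRestrict, LinearMap.finrank_range_of_inj hinj]
  refine ((degreeLTEquiv K k).restrictScalars F).finrank_eq.trans ?_
  simp [Module.finrank_pi_fintype]

theorem sub_add_one_le_natCard_ne_zero_of_mem_evalCode (hα : Function.Injective α)
    (hπ : Function.Injective π) (hk : k ≤ Fintype.card ι) {c : ι → V}
    (hc : c ∈ evalCode α π k) (hc0 : c ≠ 0) :
    Fintype.card ι - k + 1 ≤ Nat.card {t // c t ≠ 0} := by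
  classical
  obtain ⟨p, hp, rfl⟩ := hc
  have hp0 : p ≠ 0 := by rintro rfl; exact hc0 (map_zero _)
  have := natCard_eval_eq_zero_lt hα hp hp0
  simp_rw [ne_eq, evalCodeMap_eq_zero_iff hπ]
  rw [Nat.card_eq_fintype_card] at this
  rw [Nat.card_eq_fintype_card, Fintype.card_subtype_compl]
  omega

end EvaluationCode

theorem natCard_ne_zero_le_natCard_uncurry_ne_zero {ι κ M : Type*} [Finite ι] [Finite κ]
    [Zero M] (c : ι → κ → M) :
    Nat.card {t // c t ≠ 0} ≤ Nat.card {p : ι × κ // c p.1 p.2 ≠ 0} :=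
  Nat.card_le_card_of_surjective (fun p => ⟨p.1.1, fun h => p.2 (by simp [h])⟩)
    fun ⟨t, ht⟩ =>
      let ⟨u, hu⟩ := Function.ne_iff.1 ht
      ⟨⟨(t, u), hu⟩, rfl⟩

namespace Subalgebra

variable {F n : Type*} [Field F] [Fintype F] [Fintype n] [DecidableEq n]
  {S : Subalgebra F (Matrix n n F)}

theorem bijective_row_of_isUnit (hS : ∀ B ∈ S, B ≠ 0 → IsUnit B)
    (hcard : Nat.card S = Fintype.card F ^ Fintype.card n) (i : n) :
    Function.Bijective fun B : S => (B : Matrix n n F) i := by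
  refine (Nat.bijective_iff_injective_and_card _).2 ⟨fun B B' h => ?_, by simp [hcard]⟩
  by_contra hne
  refine Matrix.row_ne_zero_of_isUnit (hS _ (sub_mem B.2 B'.2) ?_) i ?_
  · exact sub_ne_zero.2 (Subtype.coe_injective.ne hne)
  · funext j
    simpa [sub_eq_zero] using congr_fun h j

theorem bijective_col_of_isUnit (hS : ∀ B ∈ S, B ≠ 0 → IsUnit B)
    (hcard : Nat.card S = Fintype.card F ^ Fintype.card n) (j : n) :
    Function.Bijective fun B : S => fun i => (B : Matrix n n F) i j := by
  refine (Nat.bijective_iff_injective_and_card _).2 ⟨fun B B' h => ?_, by simp [hcard]⟩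
  by_contra hne
  refine Matrix.col_ne_zero_of_isUnit (hS _ (sub_mem B.2 B'.2) ?_) j ?_
  · exact sub_ne_zero.2 (Subtype.coe_injective.ne hne)
  · funext i
    simpa [sub_eq_zero] using congr_fun h i

end Subalgebra

theorem row_projection_evaluation_code_general
    (F : Type*) [Field F] [Fintype F] (ℓ m k : ℕ) (hℓ : 0 < ℓ)
    (hm : m + 1 = Fintype.card F ^ ℓ) (hk : k ≤ m)
    (A : Matrix (Fin ℓ) (Fin ℓ) F)
    (hA1 : A ^ m = 1)
    (hA3 : ∀ i j : ℕ, i < m → j < m → i ≠ j → IsUnit (A ^ i - A ^ j))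
    (i₀ j₀ : Fin ℓ) :
    Function.Bijective
      (fun B : Algebra.adjoin F {A} =>
        fun u : Fin ℓ => (B : Matrix (Fin ℓ) (Fin ℓ) F) i₀ u) ∧
    Function.Bijective
      (fun B : Algebra.adjoin F {A} =>
        fun u : Fin ℓ => (B : Matrix (Fin ℓ) (Fin ℓ) F) u j₀) ∧
    (∀ π : Matrix (Fin ℓ) (Fin ℓ) F →ₗ[F] (Fin ℓ → F),
      ((∀ B, π B = fun u => B i₀ u) ∨ (∀ B, π B = fun u => B u j₀)) →
      ∃ C : Submodule F (Fin m → Fin ℓ → F),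
        (∀ c, c ∈ C ↔ ∃ P : Polynomial (Matrix (Fin ℓ) (Fin ℓ) F),
          (∀ i, P.coeff i ∈ Algebra.adjoin F {A}) ∧ P.degree < (k : ℕ) ∧
          ∀ t : Fin m, c t = π (Polynomial.eval (A ^ t.val) P)) ∧
        Module.finrank F C = k * ℓ ∧
        ∀ c ∈ C, c ≠ 0 →
          m - k + 1 ≤ Nat.card {p : Fin m × Fin ℓ // c p.1 p.2 ≠ 0}) := by
  set S := Algebra.adjoin F {A}
  have hq : 2 ≤ Fintype.card F := Fintype.one_lt_card
  have hm0 : m ≠ 0 := by have := Nat.one_lt_pow hℓ.ne' hq; omega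
  have : Nonempty (Fin ℓ) := ⟨⟨0, hℓ⟩⟩
  have hA : IsUnit A := .of_pow_eq_one hA1 hm0
  have hinj := injective_pow_of_isUnit_sub hA3
  have hle : Nat.card S ≤ m + 1 := by simpa [hm] using A.natCard_adjoin_le
  have hunit : ∀ B ∈ S, B ≠ 0 → IsUnit B := fun _ => isUnit_of_mem_adjoin hA hinj hle
  have hcard : Nat.card S = Fintype.card F ^ ℓ := (natCard_adjoin_eq hA hinj hle).trans hm
  have hrank : finrank F S = ℓ := finrank_eq_of_natCard_eq_pow hcard
  have hrow := Subalgebra.bijective_row_of_isUnit hunit (by simpa using hcard) i₀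
  have hcol := Subalgebra.bijective_col_of_isUnit hunit (by simpa using hcard) j₀
  refine ⟨hrow, hcol, fun π hπ => ?_⟩
  let α : Fin m → S := fun t =>
    ⟨A ^ (t : ℕ), pow_mem (Algebra.self_mem_adjoin_singleton F A) _⟩
  have hα : Function.Injective α := fun s t h => hinj (congrArg Subtype.val h)
  have hπinj : Function.Injective (π ∘ₗ S.val.toLinearMap) := by
    rcases hπ with h | h
    · convert hrow.1 using 2; exact h _
    · convert hcol.1 using 2; exact h _
  have := Subalgebra.isDomain_of_isUnit hunit
  refine ⟨evalCode α (π ∘ₗ S.val.toLinearMap) k, Subalgebra.mem_evalCode_iff α π k, ?_,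
    fun c hc hc0 => ?_⟩
  · rw [finrank_evalCode hα hπinj (by simpa using hk), hrank]
  · calc m - k + 1 ≤ Nat.card {t // c t ≠ 0} := by
          simpa using
            sub_add_one_le_natCard_ne_zero_of_mem_evalCode hα hπinj (by simpa using hk) hc hc0
      _ ≤ _ := natCard_ne_zero_le_natCard_uncurry_ne_zero c

/-- With `m = q^ℓ - 1`, `A ∈ M_ℓ(F_q)` a primitive `m`-th root of unity and
`k ≤ m`, the map `π` sending a matrix `B ∈ F_q[A]` to its `i₀`-th row (or its
`j₀`-th column) is an `F_q`-linear bijection, and the evaluation code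
`C_{A,k,π}` has `F_q`-dimension exactly `kℓ` and minimum Hamming distance at
least `m - k + 1`. -/
theorem row_projection_evaluation_code
    (F : Type*) [Field F] [Fintype F] (ℓ m k : ℕ) (hℓ : 0 < ℓ)
    (hm : m + 1 = Fintype.card F ^ ℓ) (hk : k ≤ m)
    (A : Matrix (Fin ℓ) (Fin ℓ) F)
    (hA1 : A ^ m = 1)
    (hA2 : ∀ i : ℕ, 0 < i → i < m → A ^ i ≠ 1)
    (hA3 : ∀ i j : ℕ, i < m → j < m → i ≠ j → IsUnit (A ^ i - A ^ j))
    (i₀ j₀ : Fin ℓ) :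
    Function.Bijective
      (fun B : Algebra.adjoin F {A} =>
        fun u : Fin ℓ => (B : Matrix (Fin ℓ) (Fin ℓ) F) i₀ u) ∧
    Function.Bijective
      (fun B : Algebra.adjoin F {A} =>
        fun u : Fin ℓ => (B : Matrix (Fin ℓ) (Fin ℓ) F) u j₀) ∧
    (∀ π : Matrix (Fin ℓ) (Fin ℓ) F →ₗ[F] (Fin ℓ → F),
      ((∀ B, π B = fun u => B i₀ u) ∨ (∀ B, π B = fun u => B u j₀)) →
      ∃ C : Submodule F (Fin m → Fin ℓ → F),
        (∀ c, c ∈ C ↔ ∃ P : Polynomial (Matrix (Fin ℓ) (Fin ℓ) F),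
          (∀ i, P.coeff i ∈ Algebra.adjoin F {A}) ∧ P.degree < (k : ℕ) ∧
          ∀ t : Fin m, c t = π (Polynomial.eval (A ^ t.val) P)) ∧
        Module.finrank F C = k * ℓ ∧
        ∀ c ∈ C, c ≠ 0 →
          m - k + 1 ≤ Nat.card {p : Fin m × Fin ℓ // c p.1 p.2 ≠ 0}) :=
  row_projection_evaluation_code_general F ℓ m k hℓ hm hk A hA1 hA3 i₀ j₀
end
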